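/- arXiv:math/0307311 — 9 statements merged into one kernel-verified Lean document; each statement's English description precedes it below -/
import Mathlib

section
/- Let E₁,…,Eₙ,F be Banach spaces over 𝕂 (ℝ or ℂ), let T : E₁×⋯×Eₙ → F be a continuous n-linear mapping and let (a₁,…,aₙ) ∈ E₁×⋯×Eₙ. If (x_j^{(s)})_{j=1}^∞ ∈ ℓ₁^w(E_s) for each s = 1,…,n, then the sequence (T(a₁+x_j^{(1)},…,aₙ+x_j^{(n)}) − T(a₁,…,aₙ))_{j=1}^∞ belongs to ℓ₁^w(F); that is, ∑_j |ψ(T(a₁+x_j^{(1)},…,aₙ+x_j^{(n)}) − T(a₁,…,aₙ))| < ∞ for every continuous linear functional ψ on F. -/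
open scoped ENNReal NNReal

noncomputable section

/-- A sequence `x` in `E` is weakly `q`-summable (`0 < q < ∞`), i.e. belongs to `ℓ_q^w(E)`:
`∑_j ‖φ (x j)‖^q < ∞` for every continuous linear functional `φ`. -/
def WeaklySummable (𝕜 : Type*) [RCLike 𝕜] {E : Type*} [NormedAddCommGroup E]
    [NormedSpace 𝕜 E] (q : ℝ) (x : ℕ → E) : Prop :=
  ∀ φ : E →L[𝕜] 𝕜, Summable fun j => ‖φ (x j)‖ ^ q

/-!
Expanding `T` multilinearly, `T (a + x_j) - T a` is the sum over nonempty `s ⊆ Fin n` of `T`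
evaluated at `x_j` on `s` and at `a` off `s`, so after composing with `ψ` it suffices to show that
the diagonal `∑_j |A (x_j on s, a off s)|` of a scalar multilinear form `A` converges. By the
uniform boundedness principle a weakly 1-summable sequence has `‖∑_{j ∈ S} c_j x_j‖ ≤ W` for all
finite `S` and `|c_j| ≤ 1`; this bounds the diagonal when `s` is a singleton. Adding a coordinate
`i₀` to `s` is handled by averaging over sign vectors `ε`: writing the diagonal sum as
`∑_j d_j A(…, x_j^{(i₀)}, …)` with unimodular `d_j`, the relation `𝔼 ε_j ε_k = δ_{jk}` makes it
the average of `∑_j d_j ε_j A(…, ∑_k ε_k x_k^{(i₀)}, …)`, in which `∑_k ε_k x_k^{(i₀)}` is a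
single vector of norm at most `W`, so the induction hypothesis applies.
-/

open Finset Function

section

variable {𝕜 : Type*} [RCLike 𝕜]

theorem WeaklySummable.exists_norm_sum_smul_le {E : Type*} [NormedAddCommGroup E]
    [NormedSpace 𝕜 E] {x : ℕ → E} (hx : WeaklySummable 𝕜 1 x) :
    ∃ W, ∀ (S : Finset ℕ) (c : S → 𝕜), (∀ j, ‖c j‖ ≤ 1) → ‖∑ j, c j • x j‖ ≤ W := by
  let g : (Σ S : Finset ℕ, {c : S → 𝕜 // ∀ j, ‖c j‖ ≤ 1}) → StrongDual 𝕜 (StrongDual 𝕜 E) :=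
    fun p => NormedSpace.inclusionInDoubleDual 𝕜 E (∑ j, p.2.1 j • x j)
  have hpointwise : ∀ φ, ∃ C, ∀ p, ‖g p φ‖ ≤ C := by
    intro φ
    refine ⟨∑' j, ‖φ (x j)‖, fun ⟨S, c, hc⟩ => ?_⟩
    have hφ : Summable fun j => ‖φ (x j)‖ := by simpa using hx φ
    calc ‖g ⟨S, c, hc⟩ φ‖ = ‖∑ j, c j * φ (x j)‖ := by simp [g]
      _ ≤ ∑ j : S, ‖φ (x j)‖ := by
          refine (norm_sum_le _ _).trans (sum_le_sum fun j _ => ?_)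
          rw [norm_mul]
          exact mul_le_of_le_one_left (norm_nonneg _) (hc j)
      _ ≤ ∑' j, ‖φ (x j)‖ := by
          rw [sum_coe_sort S fun j => ‖φ (x j)‖]
          exact hφ.sum_le_tsum _ fun _ _ => norm_nonneg _
  obtain ⟨W, hW⟩ := banach_steinhaus hpointwise
  exact ⟨W, fun S c hc => ((NormedSpace.inclusionInDoubleDualLi 𝕜).norm_map _).symm.trans_le (hW ⟨S, c, hc⟩)⟩

theorem sum_units_int_mul_eq_ite {κ : Type*} [Fintype κ] [DecidableEq κ] (j k : κ) :
    ∑ ε : κ → ℤˣ, ((ε j : ℤ) * ε k) = if j = k then 2 ^ Fintype.card κ else 0 := by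
  split_ifs with hjk
  · subst hjk
    simp [← Units.val_mul, Int.units_mul_self, Fintype.card_units_int]
  · -- flipping the `k`-th sign is a bijection that negates every term
    have : ∑ ε : κ → ℤˣ, ((ε j : ℤ) * ε k) = -∑ ε : κ → ℤˣ, ((ε j : ℤ) * ε k) := by
      conv_lhs => rw [← Equiv.sum_comp (Equiv.mulLeft (Pi.mulSingle k (-1)))]
      rw [← sum_neg_distrib]
      refine sum_congr rfl fun ε _ => ?_
      simp [hjk]
    omega

theorem RCLike.exists_sum_norm_eq_sum_mul {κ : Type*} [Fintype κ] (z : κ → 𝕜) :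
    ∃ d : κ → 𝕜, (∀ j, ‖d j‖ = 1) ∧ ((∑ j, ‖z j‖ : ℝ) : 𝕜) = ∑ j, d j * z j := by
  choose d hd hdz using fun j => RCLike.exists_norm_eq_mul_self (z j)
  exact ⟨d, hd, by push_cast; exact sum_congr rfl fun j _ => hdz j⟩

theorem LinearMap.sum_norm_apply_le {E : Type*} [AddCommGroup E] [Module 𝕜 E] {κ : Type*}
    [Fintype κ] (φ : E →ₗ[𝕜] 𝕜) (x : κ → E) {K : ℝ}
    (h : ∀ c : κ → 𝕜, (∀ j, ‖c j‖ ≤ 1) → ‖φ (∑ j, c j • x j)‖ ≤ K) :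
    ∑ j, ‖φ (x j)‖ ≤ K := by
  obtain ⟨d, hd, hsum⟩ := RCLike.exists_sum_norm_eq_sum_mul fun j => φ (x j)
  calc ∑ j, ‖φ (x j)‖ = ‖φ (∑ j, d j • x j)‖ := by
        rw [← RCLike.norm_of_nonneg (K := 𝕜) (sum_nonneg fun j _ => norm_nonneg (φ (x j))), hsum]
        simp
    _ ≤ K := h d fun j => (hd j).le

theorem LinearMap.sum_norm_diag_apply_le {E : Type*} [AddCommGroup E] [Module 𝕜 E] {κ : Type*}
    [Fintype κ] (β : κ → E →ₗ[𝕜] 𝕜) (x : κ → E) {K : ℝ}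
    (h : ∀ c : κ → 𝕜, (∀ k, ‖c k‖ ≤ 1) → ∑ j, ‖β j (∑ k, c k • x k)‖ ≤ K) :
    ∑ j, ‖β j (x j)‖ ≤ K := by
  classical
  obtain ⟨d, hd, hsum⟩ := RCLike.exists_sum_norm_eq_sum_mul fun j => β j (x j)
  let σ : (κ → ℤˣ) → κ → 𝕜 := fun ε k => ((ε k : ℤ) : 𝕜)
  have hσ : ∀ ε k, ‖σ ε k‖ = 1 := fun ε k => by
    rcases Int.units_eq_one_or (ε k) with h | h <;> simp [σ, h]
  -- averaging over all sign vectors kills the off-diagonal terms `β j (x k)`, `j ≠ k`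
  have hdiag : (2 ^ Fintype.card κ : 𝕜) * ∑ j, d j * β j (x j) =
      ∑ ε : κ → ℤˣ, ∑ j, d j * σ ε j * β j (∑ k, σ ε k • x k) := by
    have horth : ∀ j k, ∑ ε : κ → ℤˣ, σ ε j * σ ε k = if j = k then 2 ^ Fintype.card κ else 0 :=
      fun j k => by simp only [σ]; exact_mod_cast sum_units_int_mul_eq_ite j k
    simp only [map_sum, map_smul, smul_eq_mul, mul_sum]
    rw [sum_comm]
    refine sum_congr rfl fun j _ => ?_
    rw [sum_comm]
    simp_rw [show ∀ ε k, d j * σ ε j * (σ ε k * β j (x k)) = d j * β j (x k) * (σ ε j * σ ε k)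
      from fun _ _ => by ring, ← mul_sum, horth]
    simp [mul_comm]
  refine le_of_mul_le_mul_left ?_ (by positivity : (0 : ℝ) < 2 ^ Fintype.card κ)
  calc 2 ^ Fintype.card κ * ∑ j, ‖β j (x j)‖
      = ‖∑ ε : κ → ℤˣ, ∑ j, d j * σ ε j * β j (∑ k, σ ε k • x k)‖ := by
        rw [← hdiag, ← hsum, norm_mul,
          RCLike.norm_of_nonneg (K := 𝕜) (sum_nonneg fun j _ => norm_nonneg (β j (x j)))]
        simp
    _ ≤ ∑ ε : κ → ℤˣ, ∑ j, ‖β j (∑ k, σ ε k • x k)‖ := by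
        refine (norm_sum_le _ _).trans (sum_le_sum fun ε _ => ?_)
        refine (norm_sum_le _ _).trans (sum_le_sum fun j _ => ?_)
        simp [hd, hσ]
    _ ≤ ∑ _ε : κ → ℤˣ, K := sum_le_sum fun ε _ => h (σ ε) fun k => (hσ ε k).le
    _ = 2 ^ Fintype.card κ * K := by simp [Fintype.card_units_int]

end

theorem MultilinearMap.map_add_sub_map_eq_sum_piecewise {R ι : Type*} [CommSemiring R]
    [Fintype ι] [DecidableEq ι] {M₁ : ι → Type*} [∀ i, AddCommMonoid (M₁ i)]
    [∀ i, Module R (M₁ i)] {M₂ : Type*} [AddCommGroup M₂] [Module R M₂]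
    (f : MultilinearMap R M₁ M₂) (m m' : ∀ i, M₁ i) :
    f (m + m') - f m' = ∑ s ∈ (univ : Finset (Finset ι)).erase ∅, f (s.piecewise m m') := by
  rw [f.map_add_univ, ← add_sum_erase _ _ (mem_univ ∅), piecewise_empty, add_sub_cancel_left]

section

variable {𝕜 : Type*} [RCLike 𝕜] {ι : Type*} [Fintype ι] [DecidableEq ι] {E : ι → Type*}
  [∀ i, NormedAddCommGroup (E i)] [∀ i, NormedSpace 𝕜 (E i)]

theorem prod_max_norm_update_le (W : ι → ℝ) (a : ∀ i, E i) {i₀ : ι} {u : E i₀}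
    (hu : ‖u‖ ≤ W i₀) : ∏ i, max (W i) ‖update a i₀ u i‖ ≤ ∏ i, max (W i) ‖a i‖ := by
  refine prod_le_prod (fun i _ => (norm_nonneg _).trans (le_max_right _ _)) fun i _ => ?_
  rcases eq_or_ne i i₀ with rfl | hi
  · rw [update_self]
    exact max_le (le_max_left _ _) (hu.trans (le_max_left _ _))
  · simp [hi]

namespace ContinuousMultilinearMap

theorem sum_norm_apply_piecewise_le {κ : Type*} [Fintype κ] (A : ContinuousMultilinearMap 𝕜 E 𝕜)
    (x : ∀ i, κ → E i) (W : ι → ℝ)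
    (hW : ∀ i (c : κ → 𝕜), (∀ j, ‖c j‖ ≤ 1) → ‖∑ j, c j • x i j‖ ≤ W i)
    {t : Finset ι} (ht : t.Nonempty) (a : ∀ i, E i) :
    ∑ j, ‖A (t.piecewise (fun i => x i j) a)‖ ≤ ‖A‖ * ∏ i, max (W i) ‖a i‖ := by
  induction ht using Finset.Nonempty.cons_induction generalizing a with
  | singleton i₀ =>
    simp only [piecewise_singleton]
    refine (A.toMultilinearMap.toLinearMap a i₀).sum_norm_apply_le (x i₀) fun c hc => ?_
    calc ‖A (update a i₀ (∑ j, c j • x i₀ j))‖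
        ≤ ‖A‖ * ∏ i, ‖update a i₀ (∑ j, c j • x i₀ j) i‖ := A.le_opNorm _
      _ ≤ ‖A‖ * ∏ i, max (W i) ‖update a i₀ (∑ j, c j • x i₀ j) i‖ := by
          gcongr with i
          exact le_max_right _ _
      _ ≤ ‖A‖ * ∏ i, max (W i) ‖a i‖ :=
          mul_le_mul_of_nonneg_left (prod_max_norm_update_le W a (hW i₀ c hc)) (norm_nonneg A)
  | cons i₀ t hi₀ ht ih =>
    rw [cons_eq_insert]
    simp only [piecewise_insert]
    refine LinearMap.sum_norm_diag_apply_le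
      (fun j => A.toMultilinearMap.toLinearMap (t.piecewise (fun i => x i j) a) i₀) (x i₀)
      fun c hc => ?_
    simp only [MultilinearMap.toLinearMap_apply, coe_coe, update_piecewise_of_notMem _ _ _ hi₀]
    calc _ ≤ ‖A‖ * ∏ i, max (W i) ‖update a i₀ (∑ k, c k • x i₀ k) i‖ := ih _
      _ ≤ ‖A‖ * ∏ i, max (W i) ‖a i‖ :=
          mul_le_mul_of_nonneg_left (prod_max_norm_update_le W a (hW i₀ c hc)) (norm_nonneg A)

theorem summable_norm_apply_piecewise (A : ContinuousMultilinearMap 𝕜 E 𝕜) (a : ∀ i, E i)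
    {x : ∀ i, ℕ → E i} (hx : ∀ i, WeaklySummable 𝕜 1 (x i)) {t : Finset ι} (ht : t.Nonempty) :
    Summable fun j => ‖A (t.piecewise (fun i => x i j) a)‖ := by
  choose W hW using fun i => (hx i).exists_norm_sum_smul_le
  refine summable_of_sum_le (c := ‖A‖ * ∏ i, max (W i) ‖a i‖) (fun _ => norm_nonneg _) fun S => ?_
  rw [← sum_coe_sort]
  exact A.sum_norm_apply_piecewise_le (fun i (j : S) => x i j) W (fun i => hW i S) ht a

end ContinuousMultilinearMap

end

theorem multilinear_translate_mem_weak_l1_general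
    {𝕜 : Type*} [RCLike 𝕜] {n : ℕ} {E : Fin n → Type*}
    [∀ i, NormedAddCommGroup (E i)] [∀ i, NormedSpace 𝕜 (E i)]
    {F : Type*} [NormedAddCommGroup F] [NormedSpace 𝕜 F]
    (T : ContinuousMultilinearMap 𝕜 E F) (a : ∀ i, E i)
    (x : ∀ i, ℕ → E i) (hx : ∀ i, WeaklySummable 𝕜 1 (x i)) :
    WeaklySummable 𝕜 1 (fun j => T (fun i => a i + x i j) - T a) := by
  intro ψ
  simp only [Real.rpow_one]
  let A := ψ.compContinuousMultilinearMap T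
  have hdecomp (j : ℕ) : ψ (T (fun i => a i + x i j) - T a) =
      ∑ s ∈ (univ : Finset (Finset (Fin n))).erase ∅, A (s.piecewise (fun i => x i j) a) := by
    rw [map_sub, show (fun i => a i + x i j) = (fun i => x i j) + a from
      funext fun i => add_comm _ _]
    exact A.toMultilinearMap.map_add_sub_map_eq_sum_piecewise _ _
  have hsum : Summable fun j =>
      ∑ s ∈ (univ : Finset (Finset (Fin n))).erase ∅, ‖A (s.piecewise (fun i => x i j) a)‖ :=
    summable_sum fun s hs =>
      A.summable_norm_apply_piecewise a hx (nonempty_iff_ne_empty.2 (ne_of_mem_erase hs))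
  refine hsum.of_nonneg_of_le (fun j => by positivity) fun j => ?_
  rw [hdecomp]
  exact norm_sum_le _ _

/-- If `T : E₁ × ⋯ × Eₙ → F` is a continuous `n`-linear map between Banach
spaces, `(a₁,…,aₙ)` is any point, and `(x_j^{(s)})_j ∈ ℓ₁^w(E_s)` for every `s`, then the
sequence `(T(a₁+x_j^{(1)},…,aₙ+x_j^{(n)}) − T(a₁,…,aₙ))_j` belongs to `ℓ₁^w(F)`. -/
theorem multilinear_translate_mem_weak_l1
    {𝕜 : Type*} [RCLike 𝕜] {n : ℕ} {E : Fin n → Type*}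
    [∀ i, NormedAddCommGroup (E i)] [∀ i, NormedSpace 𝕜 (E i)] [∀ i, CompleteSpace (E i)]
    {F : Type*} [NormedAddCommGroup F] [NormedSpace 𝕜 F] [CompleteSpace F]
    (T : ContinuousMultilinearMap 𝕜 E F) (a : ∀ i, E i)
    (x : ∀ i, ℕ → E i) (hx : ∀ i, WeaklySummable 𝕜 1 (x i)) :
    WeaklySummable 𝕜 1 (fun j => T (fun i => a i + x i j) - T a) :=
  multilinear_translate_mem_weak_l1_general T a x hx
end
end

section
/- Let E₁,…,Eₙ,F be Banach spaces and suppose F has cotype q ∈ [2,∞). Then every continuous n-linear mapping T : E₁×⋯×Eₙ → F is absolutely (q;1,…,1)-summing at every point: for every (a₁,…,aₙ) ∈ E₁×⋯×Eₙ and all sequences (x_j^{(s)})_{j=1}^∞ ∈ ℓ₁^w(E_s), s = 1,…,n, one has ∑_j ‖T(a₁+x_j^{(1)},…,aₙ+x_j^{(n)}) − T(a₁,…,aₙ)‖^q < ∞. -/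
open scoped ENNReal NNReal

noncomputable section

/-- `F` has cotype `q` with constant `C`. -/
def HasCotypeWith (F : Type*) [NormedAddCommGroup F] (q C : ℝ) : Prop :=
  ∀ (k : ℕ) (x : Fin k → F),
    (∑ j, ‖x j‖ ^ q) ^ (1 / q) ≤
      C * ((2 : ℝ) ^ (-(k : ℝ)) *
        ∑ ε : Fin k → Bool, ‖∑ j, (if ε j then x j else -x j)‖ ^ (2 : ℝ)) ^ ((1 : ℝ) / 2)

/-- `F` has cotype `q`. -/
def HasCotype (F : Type*) [NormedAddCommGroup F] (q : ℝ) : Prop :=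
  ∃ C : ℝ, 0 ≤ C ∧ HasCotypeWith F q C

section Aux

variable {𝕜 : Type*} [RCLike 𝕜]

/-- The sign `±1` in `𝕜` attached to a boolean. -/
private def sgn (𝕜 : Type*) [RCLike 𝕜] (b : Bool) : 𝕜 := if b then 1 else -1

private lemma norm_sgn (b : Bool) : ‖sgn 𝕜 b‖ = 1 := by cases b <;> simp [sgn]

private lemma sgn_mul_self (b : Bool) : sgn 𝕜 b * sgn 𝕜 b = 1 := by cases b <;> simp [sgn]

/-- Orthogonality of Rademacher signs. -/
private lemma sum_sgn_mul {k : ℕ} (j j' : Fin k) :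
    ∑ ε : Fin k → Bool, sgn 𝕜 (ε j) * sgn 𝕜 (ε j') =
      if j = j' then ((2 : 𝕜) ^ k) else 0 := by
  rcases eq_or_ne j j' with rfl | hjj
  · rw [if_pos rfl]
    have : ∀ ε : Fin k → Bool, sgn 𝕜 (ε j) * sgn 𝕜 (ε j) = 1 := fun ε => sgn_mul_self _
    rw [Finset.sum_congr rfl fun ε _ => this ε, Finset.sum_const]
    simp [Finset.card_univ, Fintype.card_fun]
  · rw [if_neg hjj]
    refine Finset.sum_ninvolution (fun ε => Function.update ε j (!(ε j))) ?_ ?_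
      (fun _ => Finset.mem_univ _) ?_
    · intro ε
      have h1 : Function.update ε j (!(ε j)) j = !(ε j) := Function.update_self _ _ _
      have h2 : Function.update ε j (!(ε j)) j' = ε j' := Function.update_of_ne (Ne.symm hjj) _ _
      rw [h1, h2]
      have : sgn 𝕜 (!(ε j)) = -sgn 𝕜 (ε j) := by cases h : ε j <;> simp [sgn]
      rw [this]; ring
    · intro ε _
      intro h
      have h5 := congrFun h j
      rw [Function.update_self] at h5
      exact (Bool.not_ne_self (ε j)) h5
    · intro ε
      funext i
      rcases eq_or_ne i j with rfl | hi
      · simp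
      · simp [Function.update_of_ne hi]

/-- Uniform bound on unit-coefficient partial sums of a weakly `1`-summable sequence. -/
private lemma weakly_summable_bound {E : Type*} [NormedAddCommGroup E] [NormedSpace 𝕜 E]
    [CompleteSpace E] {x : ℕ → E} (hx : WeaklySummable 𝕜 1 x) :
    ∃ W : ℝ, 0 ≤ W ∧ ∀ (k : ℕ) (c : Fin k → 𝕜), (∀ j, ‖c j‖ ≤ 1) →
      ‖∑ j, c j • x j‖ ≤ W := by
  have hsum : ∀ φ : E →L[𝕜] 𝕜, Summable fun j => ‖φ (x j)‖ := by
    intro φ; simpa [Real.rpow_one] using hx φ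
  let ι : Type _ := Σ k : ℕ, {c : Fin k → 𝕜 // ∀ j, ‖c j‖ ≤ 1}
  let v : ι → E := fun p => ∑ j, (p.2.1 j) • x j
  let g : ι → StrongDual 𝕜 (StrongDual 𝕜 E) :=
    fun p => NormedSpace.inclusionInDoubleDualLi 𝕜 (v p)
  have hpt : ∀ φ : StrongDual 𝕜 E, ∃ C, ∀ p : ι, ‖g p φ‖ ≤ C := by
    intro φ
    refine ⟨∑' j, ‖φ (x j)‖, fun p => ?_⟩
    have h1 : g p φ = φ (v p) := rfl
    have h2 : φ (v p) = ∑ j, p.2.1 j * φ (x j) := by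
      simp [v, map_sum, smul_eq_mul]
    rw [h1, h2]
    calc ‖∑ j, p.2.1 j * φ (x j)‖ ≤ ∑ j, ‖p.2.1 j * φ (x j)‖ := norm_sum_le _ _
      _ ≤ ∑ j : Fin p.1, ‖φ (x j)‖ := by
          refine Finset.sum_le_sum fun j _ => ?_
          rw [norm_mul]
          calc ‖p.2.1 j‖ * ‖φ (x (j : ℕ))‖ ≤ 1 * ‖φ (x (j : ℕ))‖ :=
                mul_le_mul_of_nonneg_right (p.2.2 j) (norm_nonneg _)
            _ = ‖φ (x (j : ℕ))‖ := one_mul _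
      _ = ∑ j ∈ Finset.range p.1, ‖φ (x j)‖ :=
          Fin.sum_univ_eq_sum_range (fun j => ‖φ (x j)‖) p.1
      _ ≤ ∑' j, ‖φ (x j)‖ := Summable.sum_le_tsum _ (fun _ _ => norm_nonneg _) (hsum φ)
  obtain ⟨C', hC'⟩ := banach_steinhaus hpt
  refine ⟨max C' 0, le_max_right _ _, fun k c hc => ?_⟩
  have h3 : ‖∑ j, c j • x j‖ = ‖g ⟨k, c, hc⟩‖ :=
    ((NormedSpace.inclusionInDoubleDualLi (E := E) 𝕜).norm_map _).symm
  rw [h3]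
  exact le_trans (hC' _) (le_max_left _ _)

private lemma piecewise_update_of_notMem {ι : Type*} [DecidableEq ι] {α : ι → Type*}
    (s : Finset ι) (f g : ∀ i, α i) {i0 : ι} (h : i0 ∉ s) (v : α i0) :
    s.piecewise f (Function.update g i0 v) = Function.update (s.piecewise f g) i0 v := by
  funext i
  rcases eq_or_ne i i0 with rfl | hi
  · simp [Finset.piecewise_eq_of_notMem _ _ _ h]
  · rw [Function.update_of_ne hi]
    by_cases hs : i ∈ s
    · simp [Finset.piecewise_eq_of_mem _ _ _ hs]
    · simp [Finset.piecewise_eq_of_notMem _ _ _ hs, Function.update_of_ne hi]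

private lemma update_piecewise_erase {ι : Type*} [DecidableEq ι] {α : ι → Type*}
    (s : Finset ι) (f g : ∀ i, α i) {i0 : ι} (h : i0 ∈ s) :
    Function.update ((s.erase i0).piecewise f g) i0 (f i0) = s.piecewise f g := by
  funext i
  rcases eq_or_ne i i0 with rfl | hi
  · simp [Finset.piecewise_eq_of_mem _ _ _ h]
  · rw [Function.update_of_ne hi]
    by_cases hs : i ∈ s
    · rw [Finset.piecewise_eq_of_mem _ _ _ (Finset.mem_erase.2 ⟨hi, hs⟩),
        Finset.piecewise_eq_of_mem _ _ _ hs]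
    · rw [Finset.piecewise_eq_of_notMem _ _ _ (fun hm => hs (Finset.mem_of_mem_erase hm)),
        Finset.piecewise_eq_of_notMem _ _ _ hs]

/-- The core estimate: unit-coefficient signed partial sums of
`j ↦ T (s.piecewise (x · j) b)` are uniformly bounded, for nonempty `s`. -/
private lemma core_bound {n : ℕ} {E : Fin n → Type*}
    [∀ i, NormedAddCommGroup (E i)] [∀ i, NormedSpace 𝕜 (E i)]
    {F : Type*} [NormedAddCommGroup F] [NormedSpace 𝕜 F]
    (T : ContinuousMultilinearMap 𝕜 E F) (x : ∀ i, ℕ → E i) (W : Fin n → ℝ)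
    (hW0 : ∀ i, 0 ≤ W i)
    (hWx : ∀ i (k : ℕ) (c : Fin k → 𝕜), (∀ j, ‖c j‖ ≤ 1) → ‖∑ j, c j • x i j‖ ≤ W i) :
    ∀ (m : ℕ) (s : Finset (Fin n)), s.card = m + 1 →
      ∀ (b : ∀ i, E i) (k : ℕ) (c : Fin k → 𝕜), (∀ j, ‖c j‖ ≤ 1) →
      ‖∑ j, c j • T (s.piecewise (fun i => x i j) b)‖ ≤
        ‖T‖ * ∏ i, (if i ∈ s then W i else ‖b i‖) := by
  intro m
  induction m with
  | zero =>
    intro s hs b k c hc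
    obtain ⟨i0, rfl⟩ := Finset.card_eq_one.1 hs
    have hpw : ∀ j : Fin k, ({i0} : Finset (Fin n)).piecewise (fun i => x i (j : ℕ)) b
        = Function.update b i0 (x i0 (j : ℕ)) := fun j => Finset.piecewise_singleton _ _ _
    have hkey : ∑ j, c j • T (({i0} : Finset (Fin n)).piecewise (fun i => x i (j : ℕ)) b)
        = T (Function.update b i0 (∑ j, c j • x i0 (j : ℕ))) := by
      rw [Finset.sum_congr rfl fun j _ => by rw [hpw j]]
      simp only [← ContinuousMultilinearMap.toContinuousLinearMap_apply, map_sum, map_smul]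
    rw [hkey]
    calc ‖T (Function.update b i0 (∑ j, c j • x i0 (j : ℕ)))‖
        ≤ ‖T‖ * ∏ i, ‖Function.update b i0 (∑ j, c j • x i0 (j : ℕ)) i‖ := T.le_opNorm _
      _ ≤ ‖T‖ * ∏ i, (if i ∈ ({i0} : Finset (Fin n)) then W i else ‖b i‖) := by
          refine mul_le_mul_of_nonneg_left
            (Finset.prod_le_prod (fun i _ => norm_nonneg _) fun i _ => ?_) (norm_nonneg T)
          rcases eq_or_ne i i0 with rfl | hi
          · simpa [Function.update_self] using hWx i k c hc
          · simp [Function.update_of_ne hi, Finset.mem_singleton, hi]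
  | succ m ih =>
    intro s hs b k c hc
    have hi0 : ∃ i0, i0 ∈ s := Finset.card_pos.1 (by omega) |>.imp fun i hi => hi
    obtain ⟨i0, hi0⟩ := hi0
    have hs' : (s.erase i0).card = m + 1 := by
      rw [Finset.card_erase_of_mem hi0, hs]
      omega
    set u : (Fin k → Bool) → E i0 := fun ε => ∑ j, sgn 𝕜 (ε j) • x i0 (j : ℕ) with hu_def
    have hu : ∀ ε, ‖u ε‖ ≤ W i0 := fun ε =>
      hWx i0 k (fun j => sgn 𝕜 (ε j)) (fun j => le_of_eq (norm_sgn _))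
    set P : Fin k → ∀ i, E i := fun j => (s.erase i0).piecewise (fun i => x i (j : ℕ)) b
      with hP_def
    have expand : ∀ (ε : Fin k → Bool) (j : Fin k),
        T (Function.update (P j) i0 (u ε)) =
          ∑ j', sgn 𝕜 (ε j') • T (Function.update (P j) i0 (x i0 (j' : ℕ))) := by
      intro ε j
      simp only [← ContinuousMultilinearMap.toContinuousLinearMap_apply, hu_def, map_sum,
        map_smul]
    have key : ∑ ε : Fin k → Bool, ∑ j, (c j * sgn 𝕜 (ε j)) • T (Function.update (P j) i0 (u ε))
        = (2 : 𝕜) ^ k • ∑ j, c j • T (s.piecewise (fun i => x i (j : ℕ)) b) := by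
      calc ∑ ε : Fin k → Bool, ∑ j, (c j * sgn 𝕜 (ε j)) • T (Function.update (P j) i0 (u ε))
          = ∑ ε : Fin k → Bool, ∑ j, ∑ j', (c j * sgn 𝕜 (ε j) * sgn 𝕜 (ε j')) •
              T (Function.update (P j) i0 (x i0 (j' : ℕ))) := by
            refine Finset.sum_congr rfl fun ε _ => Finset.sum_congr rfl fun j _ => ?_
            rw [expand ε j, Finset.smul_sum]
            exact Finset.sum_congr rfl fun j' _ => by rw [smul_smul]
        _ = ∑ j, ∑ j', ∑ ε : Fin k → Bool, (c j * sgn 𝕜 (ε j) * sgn 𝕜 (ε j')) •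
              T (Function.update (P j) i0 (x i0 (j' : ℕ))) := by
            rw [Finset.sum_comm]
            exact Finset.sum_congr rfl fun j _ => Finset.sum_comm
        _ = ∑ j, ∑ j', (c j * ∑ ε : Fin k → Bool, sgn 𝕜 (ε j) * sgn 𝕜 (ε j')) •
              T (Function.update (P j) i0 (x i0 (j' : ℕ))) := by
            refine Finset.sum_congr rfl fun j _ => Finset.sum_congr rfl fun j' _ => ?_
            rw [← Finset.sum_smul, Finset.mul_sum]
            congr 1
            exact Finset.sum_congr rfl fun ε _ => by ring
        _ = ∑ j, (c j * (2 : 𝕜) ^ k) • T (Function.update (P j) i0 (x i0 (j : ℕ))) := by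
            refine Finset.sum_congr rfl fun j _ => ?_
            rw [Finset.sum_eq_single j]
            · rw [sum_sgn_mul, if_pos rfl]
            · intro j' _ hj'
              rw [sum_sgn_mul, if_neg (Ne.symm hj'), mul_zero, zero_smul]
            · intro h; exact absurd (Finset.mem_univ j) h
        _ = (2 : 𝕜) ^ k • ∑ j, c j • T (s.piecewise (fun i => x i (j : ℕ)) b) := by
            rw [Finset.smul_sum]
            refine Finset.sum_congr rfl fun j _ => ?_
            rw [show Function.update (P j) i0 (x i0 (j : ℕ)) =
                s.piecewise (fun i => x i (j : ℕ)) b from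
              update_piecewise_erase s (fun i => x i (j : ℕ)) b hi0,
              mul_comm, ← smul_smul]
    have bound_eps : ∀ ε : Fin k → Bool,
        ‖∑ j, (c j * sgn 𝕜 (ε j)) • T (Function.update (P j) i0 (u ε))‖ ≤
          ‖T‖ * ∏ i, (if i ∈ s then W i else ‖b i‖) := by
      intro ε
      have hrw : ∀ j : Fin k, Function.update (P j) i0 (u ε) =
          (s.erase i0).piecewise (fun i => x i (j : ℕ)) (Function.update b i0 (u ε)) :=
        fun j => (piecewise_update_of_notMem _ _ _ (Finset.notMem_erase i0 s) _).symm
      rw [Finset.sum_congr rfl fun j _ => by rw [hrw j]]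
      have hc' : ∀ j : Fin k, ‖c j * sgn 𝕜 (ε j)‖ ≤ 1 := by
        intro j; rw [norm_mul, norm_sgn, mul_one]; exact hc j
      refine (ih (s.erase i0) hs' (Function.update b i0 (u ε)) k _ hc').trans ?_
      refine mul_le_mul_of_nonneg_left
        (Finset.prod_le_prod (fun i _ => by
          split
          · exact hW0 i
          · exact norm_nonneg _) fun i _ => ?_) (norm_nonneg T)
      rcases eq_or_ne i i0 with rfl | hi
      · rw [if_neg (Finset.notMem_erase i s), if_pos hi0, Function.update_self]
        exact hu ε
      · rw [Function.update_of_ne hi]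
        by_cases hsi : i ∈ s
        · rw [if_pos (Finset.mem_erase.2 ⟨hi, hsi⟩), if_pos hsi]
        · rw [if_neg (fun hm => hsi (Finset.mem_of_mem_erase hm)), if_neg hsi]
    have hnorm2 : ‖(2 : 𝕜) ^ k • ∑ j, c j • T (s.piecewise (fun i => x i (j : ℕ)) b)‖ =
        (2 : ℝ) ^ k * ‖∑ j, c j • T (s.piecewise (fun i => x i (j : ℕ)) b)‖ := by
      rw [norm_smul, norm_pow, RCLike.norm_two]
    have hmain : (2 : ℝ) ^ k * ‖∑ j, c j • T (s.piecewise (fun i => x i (j : ℕ)) b)‖ ≤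
        (2 : ℝ) ^ k * (‖T‖ * ∏ i, (if i ∈ s then W i else ‖b i‖)) := by
      rw [← hnorm2, ← key]
      calc ‖∑ ε : Fin k → Bool, ∑ j, (c j * sgn 𝕜 (ε j)) • T (Function.update (P j) i0 (u ε))‖
          ≤ ∑ ε : Fin k → Bool,
              ‖∑ j, (c j * sgn 𝕜 (ε j)) • T (Function.update (P j) i0 (u ε))‖ := norm_sum_le _ _
        _ ≤ ∑ _ε : Fin k → Bool, (‖T‖ * ∏ i, (if i ∈ s then W i else ‖b i‖)) :=
            Finset.sum_le_sum fun ε _ => bound_eps ε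
        _ = (2 : ℝ) ^ k * (‖T‖ * ∏ i, (if i ∈ s then W i else ‖b i‖)) := by
            rw [Finset.sum_const, Finset.card_univ, Fintype.card_fun]
            simp [nsmul_eq_mul]
    exact le_of_mul_le_mul_left hmain (by positivity)

/-- From cotype and a uniform bound on signed partial sums, deduce `q`-summability. -/
private lemma cotype_summable {F : Type*} [NormedAddCommGroup F] {q C : ℝ}
    (hq : 2 ≤ q) (hC : 0 ≤ C) (hcot : HasCotypeWith F q C) {y : ℕ → F} {M : ℝ} (hM : 0 ≤ M)
    (hb : ∀ (k : ℕ) (ε : Fin k → Bool),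
      ‖∑ j : Fin k, (if ε j then y (j : ℕ) else -y (j : ℕ))‖ ≤ M) :
    Summable fun j => ‖y j‖ ^ q := by
  have hq0 : (0 : ℝ) < q := lt_of_lt_of_le (by norm_num) hq
  refine summable_of_sum_range_le (c := (C * M) ^ q)
    (fun j => Real.rpow_nonneg (norm_nonneg _) q) fun k => ?_
  have h1 := hcot k (fun j => y (j : ℕ))
  have h2 : ∑ j ∈ Finset.range k, ‖y j‖ ^ q = ∑ j : Fin k, ‖y (j : ℕ)‖ ^ q :=
    (Fin.sum_univ_eq_sum_range _ _).symm
  rw [h2]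
  have hA0 : 0 ≤ ∑ j : Fin k, ‖y (j : ℕ)‖ ^ q :=
    Finset.sum_nonneg fun j _ => Real.rpow_nonneg (norm_nonneg _) q
  have hinner : (2 : ℝ) ^ (-(k : ℝ)) *
      ∑ ε : Fin k → Bool, ‖∑ j : Fin k, (if ε j then y (j : ℕ) else -y (j : ℕ))‖ ^ (2 : ℝ)
      ≤ M ^ (2 : ℝ) := by
    have hsum : ∑ ε : Fin k → Bool,
        ‖∑ j : Fin k, (if ε j then y (j : ℕ) else -y (j : ℕ))‖ ^ (2 : ℝ) ≤
        (2 : ℝ) ^ k * M ^ (2 : ℝ) := by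
      calc ∑ ε : Fin k → Bool,
            ‖∑ j : Fin k, (if ε j then y (j : ℕ) else -y (j : ℕ))‖ ^ (2 : ℝ)
          ≤ ∑ _ε : Fin k → Bool, M ^ (2 : ℝ) := Finset.sum_le_sum fun ε _ =>
            Real.rpow_le_rpow (norm_nonneg _) (hb k ε) (by norm_num)
        _ = (2 : ℝ) ^ k * M ^ (2 : ℝ) := by
            rw [Finset.sum_const, Finset.card_univ, Fintype.card_fun]
            simp [nsmul_eq_mul]
      
    calc (2 : ℝ) ^ (-(k : ℝ)) *
          ∑ ε : Fin k → Bool, ‖∑ j : Fin k, (if ε j then y (j : ℕ) else -y (j : ℕ))‖ ^ (2 : ℝ)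
        ≤ (2 : ℝ) ^ (-(k : ℝ)) * ((2 : ℝ) ^ k * M ^ (2 : ℝ)) :=
          mul_le_mul_of_nonneg_left hsum (Real.rpow_nonneg (by norm_num) _)
      _ = M ^ (2 : ℝ) := by
          rw [Real.rpow_neg (by norm_num), Real.rpow_natCast, ← mul_assoc,
            inv_mul_cancel₀ (by positivity), one_mul]
  have h3 : (∑ j : Fin k, ‖y (j : ℕ)‖ ^ q) ^ (1 / q) ≤ C * M := by
    refine h1.trans ?_
    have hnn : 0 ≤ (2 : ℝ) ^ (-(k : ℝ)) *
        ∑ ε : Fin k → Bool, ‖∑ j : Fin k, (if ε j then y (j : ℕ) else -y (j : ℕ))‖ ^ (2 : ℝ) :=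
      mul_nonneg (Real.rpow_nonneg (by norm_num) _)
        (Finset.sum_nonneg fun ε _ => Real.rpow_nonneg (norm_nonneg _) _)
    have hle := Real.rpow_le_rpow hnn hinner (by norm_num : (0:ℝ) ≤ 1/2)
    have hMM : (M ^ (2 : ℝ)) ^ ((1 : ℝ) / 2) = M := by
      rw [← Real.rpow_mul hM]; norm_num
    rw [hMM] at hle
    exact mul_le_mul_of_nonneg_left hle hC
  have h4 : ∑ j : Fin k, ‖y (j : ℕ)‖ ^ q =
      ((∑ j : Fin k, ‖y (j : ℕ)‖ ^ q) ^ (1 / q)) ^ q := by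
    rw [← Real.rpow_mul hA0, one_div_mul_cancel hq0.ne', Real.rpow_one]
  rw [h4]
  exact Real.rpow_le_rpow (Real.rpow_nonneg hA0 _) h3 hq0.le

private lemma rpow_add_le_two_rpow_mul {q u v : ℝ} (hq : 0 ≤ q) (hu : 0 ≤ u) (hv : 0 ≤ v) :
    (u + v) ^ q ≤ 2 ^ q * (u ^ q + v ^ q) := by
  have h1 : u + v ≤ 2 * max u v := by
    rcases le_total u v with h | h
    · calc u + v ≤ v + v := by linarith
        _ = 2 * max u v := by rw [max_eq_right h]; ring
    · calc u + v ≤ u + u := by linarith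
        _ = 2 * max u v := by rw [max_eq_left h]; ring
  calc (u + v) ^ q ≤ (2 * max u v) ^ q :=
        Real.rpow_le_rpow (by linarith) h1 hq
    _ = 2 ^ q * (max u v) ^ q := Real.mul_rpow (by norm_num) (le_max_of_le_left hu)
    _ ≤ 2 ^ q * (u ^ q + v ^ q) := by
        refine mul_le_mul_of_nonneg_left ?_ (Real.rpow_nonneg (by norm_num) _)
        rcases le_total u v with h | h
        · rw [max_eq_right h]
          exact le_add_of_nonneg_left (Real.rpow_nonneg hu _)
        · rw [max_eq_left h]
          exact le_add_of_nonneg_right (Real.rpow_nonneg hv _)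

private lemma summable_rpow_finset_sum {q : ℝ} (hq : 0 < q) {α : Type*} (A : Finset α)
    (g : α → ℕ → ℝ) (hg0 : ∀ s j, 0 ≤ g s j)
    (h : ∀ s ∈ A, Summable fun j => g s j ^ q) :
    Summable fun j => (∑ s ∈ A, g s j) ^ q := by
  classical
  induction A using Finset.induction_on with
  | empty => simpa [Real.zero_rpow hq.ne'] using summable_zero
  | @insert a A ha ihA =>
    have hA : Summable fun j => (∑ s ∈ A, g s j) ^ q :=
      ihA fun s hs => h s (Finset.mem_insert_of_mem hs)
    have ha' : Summable fun j => g a j ^ q := h a (Finset.mem_insert_self _ _)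
    refine Summable.of_nonneg_of_le
      (fun j => Real.rpow_nonneg (Finset.sum_nonneg fun s _ => hg0 s j) q)
      (fun j => ?_) (((ha'.add hA).mul_left ((2:ℝ) ^ q)))
    rw [Finset.sum_insert ha]
    exact rpow_add_le_two_rpow_mul hq.le (hg0 a j)
      (Finset.sum_nonneg fun s _ => hg0 s j)

end Aux

/-- If `F` has cotype `q ∈ [2,∞)`, then every continuous `n`-linear map
`T : E₁ × ⋯ × Eₙ → F` is absolutely `(q;1,…,1)`-summing at every point. -/
theorem multilinear_summing_of_cotype
    {𝕜 : Type*} [RCLike 𝕜] {n : ℕ} {E : Fin n → Type*}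
    [∀ i, NormedAddCommGroup (E i)] [∀ i, NormedSpace 𝕜 (E i)] [∀ i, CompleteSpace (E i)]
    {F : Type*} [NormedAddCommGroup F] [NormedSpace 𝕜 F] [CompleteSpace F]
    {q : ℝ} (hq : 2 ≤ q) (hF : HasCotype F q)
    (T : ContinuousMultilinearMap 𝕜 E F) (a : ∀ i, E i)
    (x : ∀ i, ℕ → E i) (hx : ∀ i, WeaklySummable 𝕜 1 (x i)) :
    Summable fun j => ‖T (fun i => a i + x i j) - T a‖ ^ q := by
  classical
  obtain ⟨C, hC0, hcot⟩ := hF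
  have hq0 : (0 : ℝ) < q := lt_of_lt_of_le (by norm_num) hq
  choose W hW using fun i => weakly_summable_bound (𝕜 := 𝕜) (hx i)
  set y : Finset (Fin n) → ℕ → F := fun s j => T (s.piecewise (fun i => x i j) a) with hy
  have hys : ∀ s : Finset (Fin n), s.Nonempty → Summable fun j => ‖y s j‖ ^ q := by
    intro s hsne
    set M : ℝ := ‖T‖ * ∏ i, (if i ∈ s then W i else ‖a i‖) with hM
    have hM0 : 0 ≤ M := mul_nonneg (norm_nonneg _)
      (Finset.prod_nonneg fun i _ => by
        split
        · exact (hW i).1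
        · exact norm_nonneg _)
    refine cotype_summable hq hC0 hcot hM0 fun k ε => ?_
    have hsgn : ∀ j : Fin k, (if ε j then y s (j : ℕ) else -y s (j : ℕ)) =
        sgn 𝕜 (ε j) • y s (j : ℕ) := by
      intro j; cases h : ε j <;> simp [sgn]
    rw [Finset.sum_congr rfl fun j _ => hsgn j]
    obtain ⟨m, hm⟩ : ∃ m, s.card = m + 1 :=
      ⟨s.card - 1, (Nat.succ_pred_eq_of_pos (Finset.card_pos.2 hsne)).symm⟩
    exact core_bound T x W (fun i => (hW i).1) (fun i => (hW i).2) m s hm a k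
      (fun j => sgn 𝕜 (ε j)) (fun j => le_of_eq (norm_sgn _))
  have hdec : ∀ j, T (fun i => a i + x i j) - T a =
      ∑ s ∈ Finset.univ.erase (∅ : Finset (Fin n)), y s j := by
    intro j
    have h2 : (fun i => a i + x i j) = (fun i => x i j) + a := by
      funext i; simp [add_comm]
    have h1 : T (fun i => a i + x i j) =
        ∑ s : Finset (Fin n), T (s.piecewise (fun i => x i j) a) := by
      rw [h2]
      exact T.toMultilinearMap.map_add_univ (fun i => x i j) a
    rw [h1, ← Finset.add_sum_erase _ _ (Finset.mem_univ (∅ : Finset (Fin n)))]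
    simp only [Finset.piecewise_empty]
    rw [add_sub_cancel_left]
  have hsum2 : Summable fun j =>
      (∑ s ∈ Finset.univ.erase (∅ : Finset (Fin n)), ‖y s j‖) ^ q := by
    refine summable_rpow_finset_sum hq0 _ _ (fun s j => norm_nonneg _) fun s hs => ?_
    exact hys s (Finset.nonempty_iff_ne_empty.2 (Finset.mem_erase.1 hs).1)
  refine Summable.of_nonneg_of_le
    (fun j => Real.rpow_nonneg (norm_nonneg _) q) (fun j => ?_) hsum2
  rw [hdec j]
  exact Real.rpow_le_rpow (norm_nonneg _) (norm_sum_le _ _) hq0.le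
end
end

section
/- Let E and F be Banach spaces with E ≠ {0}, let n ≥ 1 and let 0 < s ≤ r < ∞. If every continuous n-homogeneous polynomial P : E → F is absolutely (r;s)-summing at every point of E, then every continuous linear mapping T : E → F is absolutely (r;s)-summing, i.e. ∑_j ‖T(x_j)‖^r < ∞ for every sequence (x_j) ∈ ℓ_s^w(E). -/
/-! Pick `e₀ ≠ 0` and a functional `φ` with `φ e₀ = 1`, and write `n = m + 1`. At the point `e₀`,
the `n`-homogeneous polynomial `P y = φ(y)^m • T y` has increments
`P (e₀ + xⱼ) - P e₀ = (1 + φ xⱼ)^m • T xⱼ + ((1 + φ xⱼ)^m - 1) • T e₀`, which lie in `ℓ_r` by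
hypothesis. Since `(φ xⱼ) ∈ ℓ_s ⊆ ℓ_r`, the second term is `O(φ xⱼ)` and so lies in `ℓ_r` too; and
since `φ xⱼ → 0`, the factor `(1 + φ xⱼ)^m` tends to `1`, so `T xⱼ ∈ ℓ_r`. -/

open scoped ENNReal NNReal

noncomputable section

open Filter Topology Asymptotics

section Memℓp

variable {α E F : Type*} [NormedAddCommGroup E] [NormedAddCommGroup F] {p : ℝ≥0∞}

theorem memℓp_ofReal_iff {r : ℝ} (hr : 0 < r) {f : α → E} :
    Memℓp f (ENNReal.ofReal r) ↔ Summable fun i => ‖f i‖ ^ r := by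
  rw [memℓp_gen_iff (by rwa [ENNReal.toReal_ofReal hr.le]), ENNReal.toReal_ofReal hr.le]

theorem Memℓp.of_isBigO (hp : 0 < p.toReal) {f : α → E} {g : α → F} (hg : Memℓp g p)
    (hfg : f =O[cofinite] g) : Memℓp f p := by
  obtain ⟨c, hc, hcfg⟩ := hfg.exists_pos
  rw [memℓp_gen_iff hp] at hg ⊢
  refine (hg.mul_left (c ^ p.toReal)).of_norm_bounded_eventually ?_
  filter_upwards [hcfg.bound] with i hi
  rw [Real.norm_of_nonneg (by positivity), ← Real.mul_rpow hc.le (norm_nonneg _)]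
  gcongr

theorem Memℓp.tendsto_cofinite_zero (hp : 0 < p.toReal) {f : α → E} (hf : Memℓp f p) :
    Tendsto f cofinite (𝓝 0) := by
  rw [tendsto_zero_iff_norm_tendsto_zero]
  have := (hf.summable hp).tendsto_cofinite_zero.rpow_const (p := p.toReal⁻¹)
    (Or.inr (by positivity))
  simpa [Real.rpow_rpow_inv (norm_nonneg _) hp.ne', Real.zero_rpow (inv_pos.2 hp).ne'] using this

end Memℓp

section NontriviallyNormedField

variable {𝕜 : Type*} [NontriviallyNormedField 𝕜]

theorem isBigO_one_add_pow_sub_one (m : ℕ) :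
    (fun t : 𝕜 => (1 + t) ^ m - 1) =O[𝓝 0] fun t => t := by
  simpa using (((hasDerivAt_id (0 : 𝕜)).const_add 1).pow m).isBigO_sub

theorem Memℓp.of_one_add_pow_smul_add_sub_one_smul {α F : Type*} [NormedAddCommGroup F]
    [NormedSpace 𝕜 F] {p : ℝ≥0∞} (hp : 0 < p.toReal) {z : α → 𝕜} (hz : Memℓp z p) {v : α → F}
    {w : F} {m : ℕ} (h : Memℓp (fun i => (1 + z i) ^ m • v i + ((1 + z i) ^ m - 1) • w) p) :
    Memℓp v p := by
  have hz0 := hz.tendsto_cofinite_zero hp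
  have hsmul_w : (fun i => ((1 + z i) ^ m - 1) • w) =O[cofinite] fun i => (1 + z i) ^ m - 1 :=
    IsBigO.of_bound ‖w‖ (Eventually.of_forall fun i => by rw [norm_smul, mul_comm])
  have hw : Memℓp (fun i => ((1 + z i) ^ m - 1) • w) p :=
    hz.of_isBigO hp (hsmul_w.trans ((isBigO_one_add_pow_sub_one m).comp_tendsto hz0))
  have hu : Memℓp (fun i => (1 + z i) ^ m • v i) p := by
    convert h.sub hw using 1
    ext i
    simp
  have hpow : Tendsto (fun i => (1 + z i) ^ m) cofinite (𝓝 1) := by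
    simpa using (hz0.const_add 1).pow m
  refine hu.of_isBigO hp (IsBigO.of_bound 2 ?_)
  filter_upwards [hpow.norm.eventually (lt_mem_nhds (by norm_num : (1 : ℝ) / 2 < ‖(1 : 𝕜)‖))]
    with i hi
  rw [norm_smul]
  nlinarith [norm_nonneg (v i)]

theorem exists_continuousMultilinearMap_apply_diag_eq_pow_smul {E F : Type*}
    [NormedAddCommGroup E] [NormedSpace 𝕜 E] [NormedAddCommGroup F] [NormedSpace 𝕜 F]
    (φ : E →L[𝕜] 𝕜) (T : E →L[𝕜] F) (m : ℕ) :
    ∃ A : ContinuousMultilinearMap 𝕜 (fun _ : Fin (m + 1) => E) F,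
      ∀ y, A (fun _ => y) = φ y ^ m • T y :=
  ⟨((ContinuousMultilinearMap.mkPiRing 𝕜 (Fin m) T).compContinuousLinearMap
      fun _ => φ).uncurryRight,
    fun y => by simp [ContinuousMultilinearMap.uncurryRight_apply, Fin.init]⟩

end NontriviallyNormedField

theorem linear_summing_of_polynomial_summing_everywhere_general
    {𝕜 : Type*} [RCLike 𝕜] {E F : Type*}
    [NormedAddCommGroup E] [NormedSpace 𝕜 E] [Nontrivial E]
    [NormedAddCommGroup F] [NormedSpace 𝕜 F]
    {n : ℕ} (hn : 1 ≤ n) {r s : ℝ} (hs : 0 < s) (hsr : s ≤ r)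
    (hpoly : ∀ (A : ContinuousMultilinearMap 𝕜 (fun _ : Fin n => E) F) (a : E)
      (x : ℕ → E), WeaklySummable 𝕜 s x →
        Summable fun j => ‖A (fun _ => a + x j) - A (fun _ => a)‖ ^ r) :
    ∀ (T : E →L[𝕜] F) (x : ℕ → E), WeaklySummable 𝕜 s x →
      Summable fun j => ‖T (x j)‖ ^ r := by
  intro T x hx
  have hr : 0 < r := hs.trans_le hsr
  obtain ⟨m, rfl⟩ : ∃ m, n = m + 1 := ⟨n - 1, by omega⟩
  obtain ⟨e₀, he₀⟩ := exists_ne (0 : E)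
  obtain ⟨φ, hφ⟩ := SeparatingDual.exists_eq_one (R := 𝕜) he₀
  obtain ⟨A, hA⟩ := exists_continuousMultilinearMap_apply_diag_eq_pow_smul φ T m
  have hz : Memℓp (fun j => φ (x j)) (ENNReal.ofReal r) :=
    ((memℓp_ofReal_iff hs).2 (hx φ)).of_exponent_ge (ENNReal.ofReal_le_ofReal hsr)
  have hP : Memℓp (fun j => (1 + φ (x j)) ^ m • T (x j) + ((1 + φ (x j)) ^ m - 1) • T e₀)
      (ENNReal.ofReal r) := by
    convert (memℓp_ofReal_iff hr).2 (hpoly A e₀ x hx) using 2 with j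
    simp only [hA, map_add, hφ, one_pow, one_smul]
    module
  rw [← memℓp_ofReal_iff hr]
  exact Memℓp.of_one_add_pow_smul_add_sub_one_smul (by rwa [ENNReal.toReal_ofReal hr.le]) hz hP

/-- Let `E ≠ {0}`, `n ≥ 1` and `0 < s ≤ r < ∞`. If every continuous
`n`-homogeneous polynomial `P : E → F` (i.e. `P x = A (x,…,x)` for a continuous `n`-linear
`A`) is absolutely `(r;s)`-summing at every point of `E`, then every continuous linear map
`T : E → F` is absolutely `(r;s)`-summing. -/
theorem linear_summing_of_polynomial_summing_everywhere
    {𝕜 : Type*} [RCLike 𝕜] {E F : Type*}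
    [NormedAddCommGroup E] [NormedSpace 𝕜 E] [CompleteSpace E] [Nontrivial E]
    [NormedAddCommGroup F] [NormedSpace 𝕜 F] [CompleteSpace F]
    {n : ℕ} (hn : 1 ≤ n) {r s : ℝ} (hs : 0 < s) (hsr : s ≤ r)
    (hpoly : ∀ (A : ContinuousMultilinearMap 𝕜 (fun _ : Fin n => E) F) (a : E)
      (x : ℕ → E), WeaklySummable 𝕜 s x →
        Summable fun j => ‖A (fun _ => a + x j) - A (fun _ => a)‖ ^ r) :
    ∀ (T : E →L[𝕜] F) (x : ℕ → E), WeaklySummable 𝕜 s x →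
      Summable fun j => ‖T (x j)‖ ^ r :=
  linear_summing_of_polynomial_summing_everywhere_general hn hs hsr hpoly
end
end

section
/- Let E₁,…,Eₙ,F be Banach spaces, n ≥ 2, q ≥ 1, r > 0, and p₁,…,p_{n−1} ∈ (0,∞]. Suppose there is a constant C > 0 such that every continuous linear mapping u : Eₙ → F satisfies (∑_j ‖u(y_j)‖^q)^{1/q} ≤ C·‖u‖·‖(y_j)‖_{w,r} for every (y_j) ∈ ℓ_r^w(Eₙ). If T : E₁×⋯×Eₙ → F is a continuous n-linear mapping that is absolutely (q;p₁,…,p_{n−1},∞)-summing at the origin, then T is 2-fully (q;p₁,…,p_{n−1},r)-summing in the sense that ∑_{k=1}^∞ ∑_{j=1}^∞ ‖T(x_k^{(1)},…,x_k^{(n−1)}, y_j)‖^q < ∞ whenever (x_k^{(l)}) ∈ ℓ_{p_l}^w(E_l) for l = 1,…,n−1 and (y_j) ∈ ℓ_r^w(Eₙ). -/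
open scoped ENNReal NNReal

noncomputable section

/-- Membership in `ℓ_q^w(E)` for `q ∈ (0,∞]`; for `q = ∞` this means boundedness. -/
def MemWeakLp (𝕜 : Type*) [RCLike 𝕜] {E : Type*} [NormedAddCommGroup E]
    [NormedSpace 𝕜 E] (q : ℝ≥0∞) (x : ℕ → E) : Prop :=
  if q = ⊤ then ∃ M : ℝ, ∀ j, ‖x j‖ ≤ M
  else ∀ φ : E →L[𝕜] 𝕜, Summable fun j => ‖φ (x j)‖ ^ q.toReal

/-!
Freeze the first `n - 1` arguments at `x_k = (x_k^{(1)}, …, x_k^{(n-1)})` and let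
`u_k := T(x_k, ·) : Eₙ → F`. Testing the summability of `T` at the origin against bounded
sequences of almost norming unit vectors `z_k` gives `∑_k ‖u_k‖^q < ∞`. By the hypothesis on
linear maps, `∑_j ‖u_k(y_j)‖^q ≤ (C B)^q ‖u_k‖^q`, where `B` bounds the weak `ℓ_r`-sums of `(y_j)`
uniformly over the dual unit ball; such a `B` exists by a Baire category argument on the dual
(for `r < 1` the weak `ℓ_r`-sum is only a quasi-norm, so Banach–Steinhaus does not apply
directly). Summing over `k` proves the theorem.
-/

open Metric

lemma add_rpow_le_two_rpow_mul_add_rpow {a b r : ℝ} (ha : 0 ≤ a) (hb : 0 ≤ b) (hr : 0 ≤ r) :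
    (a + b) ^ r ≤ 2 ^ r * (a ^ r + b ^ r) :=
  calc (a + b) ^ r ≤ (2 * max a b) ^ r :=
        Real.rpow_le_rpow (by positivity) (by linarith [le_max_left a b, le_max_right a b]) hr
    _ = 2 ^ r * max (a ^ r) (b ^ r) := by
        rw [Real.mul_rpow zero_le_two (le_max_of_le_left ha), Real.rpow_max ha hb hr]
    _ ≤ 2 ^ r * (a ^ r + b ^ r) :=
        mul_le_mul_of_nonneg_left (max_le_add_of_nonneg (by positivity) (by positivity))
          (by positivity)

section WeakSums

variable {𝕜 E : Type*} [RCLike 𝕜] [NormedAddCommGroup E] [NormedSpace 𝕜 E] {r : ℝ} {y : ℕ → E}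

lemma tsum_norm_smul_apply_rpow (c : 𝕜) (φ : E →L[𝕜] 𝕜) :
    ∑' j, ‖(c • φ) (y j)‖ ^ r = ‖c‖ ^ r * ∑' j, ‖φ (y j)‖ ^ r := by
  simp only [smul_apply, norm_smul,
    Real.mul_rpow (norm_nonneg _) (norm_nonneg _), tsum_mul_left]

lemma WeaklySummable.tsum_sub_apply_rpow_le (hy : WeaklySummable 𝕜 r y) (hr : 0 ≤ r)
    (φ ψ : E →L[𝕜] 𝕜) :
    ∑' j, ‖(φ - ψ) (y j)‖ ^ r ≤ 2 ^ r * (∑' j, ‖φ (y j)‖ ^ r + ∑' j, ‖ψ (y j)‖ ^ r) := by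
  rw [← (hy φ).tsum_add (hy ψ), ← tsum_mul_left]
  refine (hy _).tsum_le_tsum (fun j => ?_) (((hy φ).add (hy ψ)).mul_left _)
  calc ‖(φ - ψ) (y j)‖ ^ r ≤ (‖φ (y j)‖ + ‖ψ (y j)‖) ^ r :=
        Real.rpow_le_rpow (norm_nonneg _) (norm_sub_le _ _) hr
    _ ≤ _ := add_rpow_le_two_rpow_mul_add_rpow (norm_nonneg _) (norm_nonneg _) hr

lemma WeaklySummable.exists_ball_tsum_rpow_le (hy : WeaklySummable 𝕜 r y) (hr : 0 ≤ r) :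
    ∃ φ₀ : E →L[𝕜] 𝕜, ∃ ε > 0, ∃ M : ℝ, ∀ φ ∈ ball φ₀ ε, ∑' j, ‖φ (y j)‖ ^ r ≤ M := by
  -- `S n = {φ | ∑' j, ‖φ (y j)‖ ^ r ≤ n}`, written through finite partial sums to see it is closed
  let S : ℕ → Set (E →L[𝕜] 𝕜) := fun n => ⋂ s : Finset ℕ, {φ | ∑ j ∈ s, ‖φ (y j)‖ ^ r ≤ n}
  have hclosed : ∀ n, IsClosed (S n) := fun n =>
    isClosed_iInter fun s => isClosed_le (continuous_finsetSum s fun j _ =>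
      ((ContinuousLinearMap.apply 𝕜 𝕜 (y j)).continuous.norm.rpow_const
        fun _ => Or.inr hr)) continuous_const
  have hcover : ⋃ n, S n = Set.univ := Set.eq_univ_of_forall fun φ =>
    Set.mem_iUnion.2 ⟨⌈∑' j, ‖φ (y j)‖ ^ r⌉₊, Set.mem_iInter.2 fun s =>
      ((hy φ).sum_le_tsum s fun j _ => by positivity).trans (Nat.le_ceil _)⟩
  obtain ⟨n, φ₀, hφ₀⟩ := nonempty_interior_of_iUnion_of_closed hclosed hcover
  obtain ⟨ε, hε, hball⟩ := Metric.mem_nhds_iff.1 (mem_interior_iff_mem_nhds.1 hφ₀)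
  exact ⟨φ₀, ε, hε, n, fun φ hφ =>
    (hy φ).tsum_le_of_sum_le fun s => Set.mem_iInter.1 (hball hφ) s⟩

lemma WeaklySummable.exists_tsum_rpow_le (hy : WeaklySummable 𝕜 r y) (hr : 0 ≤ r) :
    ∃ M : ℝ, 0 ≤ M ∧ ∀ φ : E →L[𝕜] 𝕜, ‖φ‖ ≤ 1 → ∑' j, ‖φ (y j)‖ ^ r ≤ M := by
  obtain ⟨φ₀, ε, hε, M, hM⟩ := hy.exists_ball_tsum_rpow_le hr
  have hM0 : 0 ≤ M := (tsum_nonneg fun j => by positivity).trans (hM φ₀ (mem_ball_self hε))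
  set c : 𝕜 := ((ε / 2 : ℝ) : 𝕜)
  have hc : ‖c‖ = ε / 2 := by simp [c, abs_of_pos hε]
  refine ⟨2 ^ r * (M + M) / (ε / 2) ^ r, by positivity, fun φ hφ => ?_⟩
  -- `c • φ = (φ₀ + c • φ) - φ₀` with both terms in the ball where the weak sums are bounded
  have hcφ : ‖c • φ‖ < ε := by
    rw [norm_smul, hc]
    nlinarith
  have hin : φ₀ + c • φ ∈ ball φ₀ ε := by simpa [dist_eq_norm] using hcφ
  rw [le_div_iff₀' (by positivity), ← hc, ← tsum_norm_smul_apply_rpow]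
  calc ∑' j, ‖(c • φ) (y j)‖ ^ r = ∑' j, ‖((φ₀ + c • φ) - φ₀) (y j)‖ ^ r := by
        rw [add_sub_cancel_left]
    _ ≤ 2 ^ r * (M + M) :=
        (hy.tsum_sub_apply_rpow_le hr _ _).trans <| mul_le_mul_of_nonneg_left
          (add_le_add (hM _ hin) (hM _ (mem_ball_self hε))) (by positivity)

end WeakSums

lemma ContinuousLinearMap.summable_opNorm_rpow {𝕜 E F : Type*} [DenselyNormedField 𝕜]
    [NormedAddCommGroup E] [NormedSpace 𝕜 E] [SeminormedAddCommGroup F] [NormedSpace 𝕜 F]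
    {u : ℕ → E →L[𝕜] F} {q : ℝ} (hq : 0 ≤ q)
    (hu : ∀ z : ℕ → E, (∃ M : ℝ, ∀ k, ‖z k‖ ≤ M) → Summable fun k => ‖u k (z k)‖ ^ q) :
    Summable fun k => ‖u k‖ ^ q := by
  have hnorming : ∀ k, ∃ z : E, ‖z‖ ≤ 1 ∧ ‖u k‖ ≤ 2 * ‖u k z‖ := fun k => by
    obtain h | h := lt_or_ge (‖u k‖ / 2) ‖u k‖
    · obtain ⟨z, hz, hlt⟩ := (u k).exists_lt_apply_of_lt_opNorm h
      exact ⟨z, hz.le, by linarith⟩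
    · exact ⟨0, by simp, by rw [map_zero, norm_zero, mul_zero]; linarith⟩
  choose z hz hnorm using hnorming
  refine ((hu z ⟨1, hz⟩).mul_left (2 ^ q)).of_nonneg_of_le (fun k => by positivity) fun k => ?_
  calc ‖u k‖ ^ q ≤ (2 * ‖u k (z k)‖) ^ q := Real.rpow_le_rpow (norm_nonneg _) (hnorm k) hq
    _ = 2 ^ q * ‖u k (z k)‖ ^ q := Real.mul_rpow zero_le_two (norm_nonneg _)

lemma summable_prod_rpow_of_rpow_tsum_le {f : ℕ → ℕ → ℝ} {a : ℕ → ℝ} {q : ℝ} (hq : 0 < q)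
    (hf : ∀ k j, 0 ≤ f k j) (hrow : ∀ k, Summable fun j => f k j ^ q)
    (hbound : ∀ k, (∑' j, f k j ^ q) ^ (1 / q) ≤ a k) (ha : Summable fun k => a k ^ q) :
    Summable fun kj : ℕ × ℕ => f kj.1 kj.2 ^ q := by
  have hfq : ∀ k j, 0 ≤ f k j ^ q := fun k j => Real.rpow_nonneg (hf k j) q
  have htsum : ∀ k, ∑' j, f k j ^ q ≤ a k ^ q := fun k => by
    have hS : 0 ≤ ∑' j, f k j ^ q := tsum_nonneg fun j => hfq k j
    rw [one_div] at hbound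
    exact (Real.rpow_inv_le_iff_of_pos hS ((Real.rpow_nonneg hS _).trans (hbound k)) hq).1
      (hbound k)
  rw [summable_prod_of_nonneg fun kj => hfq kj.1 kj.2]
  exact ⟨hrow, ha.of_nonneg_of_le (fun k => tsum_nonneg fun j => hfq k j) htsum⟩

lemma ContinuousMultilinearMap.toContinuousLinearMap_snoc_last_apply {𝕜 : Type*}
    [NontriviallyNormedField 𝕜] {n : ℕ} {E : Fin (n + 1) → Type*}
    [∀ i, SeminormedAddCommGroup (E i)] [∀ i, NormedSpace 𝕜 (E i)]
    {F : Type*} [SeminormedAddCommGroup F] [NormedSpace 𝕜 F]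
    (T : ContinuousMultilinearMap 𝕜 E F) (v : ∀ i : Fin n, E i.castSucc) (w z : E (Fin.last n)) :
    T.toContinuousLinearMap (Fin.snoc v w) (Fin.last n) z = T (Fin.snoc v z) := by
  simp [Fin.update_snoc_last]

theorem two_fully_summing_of_summing_general
    {𝕜 : Type*} [RCLike 𝕜] {m : ℕ} {E : Fin (m + 1) → Type*}
    [∀ i, NormedAddCommGroup (E i)] [∀ i, NormedSpace 𝕜 (E i)]
    {F : Type*} [NormedAddCommGroup F] [NormedSpace 𝕜 F]
    {q r : ℝ} (hq : 1 ≤ q) (hr : 0 < r)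
    (p : Fin m → ℝ≥0∞)
    (C : ℝ) (hC : 0 < C)
    (hlin : ∀ u : E (Fin.last m) →L[𝕜] F, ∀ y : ℕ → E (Fin.last m),
      WeaklySummable 𝕜 r y →
        (Summable fun j => ‖u (y j)‖ ^ q) ∧
        ∀ B : ℝ, (∀ φ : E (Fin.last m) →L[𝕜] 𝕜, ‖φ‖ ≤ 1 →
            (∑' j, ‖φ (y j)‖ ^ r) ^ (1 / r) ≤ B) →
          (∑' j, ‖u (y j)‖ ^ q) ^ (1 / q) ≤ C * ‖u‖ * B)
    (T : ContinuousMultilinearMap 𝕜 E F)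
    (hT : ∀ x : ∀ l : Fin m, ℕ → E l.castSucc, (∀ l, MemWeakLp 𝕜 (p l) (x l)) →
      ∀ y : ℕ → E (Fin.last m), (∃ M : ℝ, ∀ j, ‖y j‖ ≤ M) →
        Summable fun j => ‖T (Fin.snoc (fun l => x l j) (y j))‖ ^ q) :
    ∀ x : ∀ l : Fin m, ℕ → E l.castSucc, (∀ l, MemWeakLp 𝕜 (p l) (x l)) →
      ∀ y : ℕ → E (Fin.last m), WeaklySummable 𝕜 r y →
        Summable fun kj : ℕ × ℕ =>
          ‖T (Fin.snoc (fun l => x l kj.1) (y kj.2))‖ ^ q := by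
  intro x hx y hy
  have hq0 : 0 < q := one_pos.trans_le hq
  obtain ⟨M, hM0, hM⟩ := hy.exists_tsum_rpow_le hr.le
  have hB : ∀ φ : E (Fin.last m) →L[𝕜] 𝕜, ‖φ‖ ≤ 1 →
      (∑' j, ‖φ (y j)‖ ^ r) ^ (1 / r) ≤ M ^ (1 / r) := fun φ hφ =>
    Real.rpow_le_rpow (tsum_nonneg fun j => by positivity) (hM φ hφ) (by positivity)
  let u : ℕ → E (Fin.last m) →L[𝕜] F := fun k =>
    T.toContinuousLinearMap (Fin.snoc (fun l => x l k) 0) (Fin.last m)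
  have hu : ∀ k z, u k z = T (Fin.snoc (fun l => x l k) z) := fun k z =>
    T.toContinuousLinearMap_snoc_last_apply _ _ z
  have hnorm : Summable fun k => ‖u k‖ ^ q :=
    ContinuousLinearMap.summable_opNorm_rpow hq0.le fun z hz => by
      simpa only [hu] using hT x hx z hz
  have hsum : Summable fun kj : ℕ × ℕ => ‖u kj.1 (y kj.2)‖ ^ q :=
    summable_prod_rpow_of_rpow_tsum_le (f := fun k j => ‖u k (y j)‖)
      (a := fun k => C * ‖u k‖ * M ^ (1 / r)) hq0 (fun _ _ => norm_nonneg _)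
      (fun k => (hlin (u k) y hy).1) (fun k => (hlin (u k) y hy).2 _ hB)
      ((hnorm.mul_left ((C * M ^ (1 / r)) ^ q)).congr fun k => by
        rw [mul_right_comm, Real.mul_rpow (by positivity) (norm_nonneg _)])
  simpa only [hu] using hsum

/-- Let `n = m + 1 ≥ 2`, `q ≥ 1`, `r > 0`, `p₁,…,p_{n−1} ∈ (0,∞]`. Suppose
there is `C > 0` such that every continuous linear `u : Eₙ → F` satisfies
`(∑_j ‖u y_j‖^q)^{1/q} ≤ C ‖u‖ ‖(y_j)‖_{w,r}` for every `(y_j) ∈ ℓ_r^w(Eₙ)`. If a continuous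
`n`-linear `T : E₁ × ⋯ × Eₙ → F` is absolutely `(q;p₁,…,p_{n−1},∞)`-summing at the origin,
then `T` is `2`-fully `(q;p₁,…,p_{n−1},r)`-summing:
`∑_k ∑_j ‖T(x_k^{(1)},…,x_k^{(n−1)},y_j)‖^q < ∞`. -/
theorem two_fully_summing_of_summing
    {𝕜 : Type*} [RCLike 𝕜] {m : ℕ} (hm : 1 ≤ m) {E : Fin (m + 1) → Type*}
    [∀ i, NormedAddCommGroup (E i)] [∀ i, NormedSpace 𝕜 (E i)] [∀ i, CompleteSpace (E i)]
    {F : Type*} [NormedAddCommGroup F] [NormedSpace 𝕜 F] [CompleteSpace F]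
    {q r : ℝ} (hq : 1 ≤ q) (hr : 0 < r)
    (p : Fin m → ℝ≥0∞) (hp : ∀ l, 0 < p l)
    (C : ℝ) (hC : 0 < C)
    (hlin : ∀ u : E (Fin.last m) →L[𝕜] F, ∀ y : ℕ → E (Fin.last m),
      WeaklySummable 𝕜 r y →
        (Summable fun j => ‖u (y j)‖ ^ q) ∧
        ∀ B : ℝ, (∀ φ : E (Fin.last m) →L[𝕜] 𝕜, ‖φ‖ ≤ 1 →
            (∑' j, ‖φ (y j)‖ ^ r) ^ (1 / r) ≤ B) →
          (∑' j, ‖u (y j)‖ ^ q) ^ (1 / q) ≤ C * ‖u‖ * B)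
    (T : ContinuousMultilinearMap 𝕜 E F)
    (hT : ∀ x : ∀ l : Fin m, ℕ → E l.castSucc, (∀ l, MemWeakLp 𝕜 (p l) (x l)) →
      ∀ y : ℕ → E (Fin.last m), (∃ M : ℝ, ∀ j, ‖y j‖ ≤ M) →
        Summable fun j => ‖T (Fin.snoc (fun l => x l j) (y j))‖ ^ q) :
    ∀ x : ∀ l : Fin m, ℕ → E l.castSucc, (∀ l, MemWeakLp 𝕜 (p l) (x l)) →
      ∀ y : ℕ → E (Fin.last m), WeaklySummable 𝕜 r y →
        Summable fun kj : ℕ × ℕ =>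
          ‖T (Fin.snoc (fun l => x l kj.1) (y kj.2))‖ ^ q :=
  two_fully_summing_of_summing_general hq hr p C hC hlin T hT
end
end

section
/- Let E₁,…,Eₙ,F be Banach spaces with E_{t+1},…,Eₙ ≠ {0}, let 1 ≤ t < n, r > 0 and s₁,…,s_t ∈ (0,∞]. If every continuous n-linear mapping S : E₁×⋯×Eₙ → F is absolutely (r;s₁,…,s_t,∞,…,∞)-summing at the origin, then every continuous t-linear mapping T : E₁×⋯×E_t → F is absolutely (r;s₁,…,s_t)-summing at the origin: ∑_j ‖T(x_j^{(1)},…,x_j^{(t)})‖^r < ∞ whenever (x_j^{(l)}) ∈ ℓ_{s_l}^w(E_l) for l = 1,…,t. -/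
/-!
Given `T`, fix nonzero vectors `w i` for `i ≥ t` and functionals `ψ i` with `ψ i (w i) = 1`
(Hahn–Banach). The `n`-linear map `y ↦ (∏_{i ≥ t} ψ i (y i)) • T (y 0, …, y (t-1))` is summing by
hypothesis, and at `(x_j, w_t, …, w_{n-1})` it takes exactly the value `T (x_j)`; the padding
sequences are constant, hence bounded.
-/

open scoped ENNReal NNReal

noncomputable section

open Finset Function

section ProdUpdate

variable {R ι κ : Type*} [CommSemiring R] [Fintype ι] [DecidableEq ι] {E : ι → Type*}
  [∀ i, AddCommMonoid (E i)] [∀ i, Module R (E i)] {f : κ → ι} [DecidablePred (· ∈ Set.range f)]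
  (ψ : ∀ i, E i →ₗ[R] R) (y : ∀ i, E i)

theorem prod_compl_range_update_of_mem {i : ι} (hi : i ∈ Set.range f) (z : E i) :
    ∏ k ∈ univ.filter (· ∉ Set.range f), ψ k (update y i z k) =
      ∏ k ∈ univ.filter (· ∉ Set.range f), ψ k (y k) :=
  prod_congr rfl fun k hk => by rw [update_of_ne (by rintro rfl; simp_all)]

theorem prod_compl_range_update_of_notMem {i : ι} (hi : i ∉ Set.range f) (z : E i) :
    ∏ k ∈ univ.filter (· ∉ Set.range f), ψ k (update y i z k) =
      ψ i z * ∏ k ∈ (univ.filter (· ∉ Set.range f)).erase i, ψ k (y k) := by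
  rw [← mul_prod_erase _ _ (by simpa using hi), update_self]
  exact congrArg _ (prod_congr rfl fun k hk => by rw [update_of_ne (ne_of_mem_erase hk)])

end ProdUpdate

section ExtendAlong

variable {R ι κ F : Type*} [CommSemiring R] [Fintype ι] {E : ι → Type*}
  [∀ i, AddCommMonoid (E i)] [∀ i, Module R (E i)] [AddCommMonoid F] [Module R F]
  {f : κ → ι} [DecidablePred (· ∈ Set.range f)]

def MultilinearMap.extendAlong (T : MultilinearMap R (fun l => E (f l)) F) (hf : Injective f)
    (ψ : ∀ i, E i →ₗ[R] R) : MultilinearMap R E F where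
  toFun y := (∏ i ∈ univ.filter (· ∉ Set.range f), ψ i (y i)) • T fun l => y (f l)
  map_update_add' y i a b := by
    let := Classical.decEq κ
    by_cases hi : i ∈ Set.range f
    · obtain ⟨l, rfl⟩ := hi
      simp only [prod_compl_range_update_of_mem ψ y ⟨l, rfl⟩,
        update_comp_eq_of_injective' y hf, T.map_update_add, smul_add]
    · simp only [prod_compl_range_update_of_notMem ψ y hi,
        update_comp_eq_of_forall_ne' y _ fun l h => hi ⟨l, h⟩, map_add, add_mul, add_smul]
  map_update_smul' y i c a := by
    let := Classical.decEq κ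
    by_cases hi : i ∈ Set.range f
    · obtain ⟨l, rfl⟩ := hi
      simp only [prod_compl_range_update_of_mem ψ y ⟨l, rfl⟩,
        update_comp_eq_of_injective' y hf, T.map_update_smul, smul_comm c]
    · simp only [prod_compl_range_update_of_notMem ψ y hi,
        update_comp_eq_of_forall_ne' y _ fun l h => hi ⟨l, h⟩, map_smul, smul_eq_mul, mul_assoc,
        smul_smul]

namespace ContinuousMultilinearMap

variable [TopologicalSpace R] [ContinuousMul R] [∀ i, TopologicalSpace (E i)] [TopologicalSpace F]
  [ContinuousSMul R F]

def extendAlong (T : ContinuousMultilinearMap R (fun l => E (f l)) F) (hf : Injective f)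
    (ψ : ∀ i, E i →L[R] R) : ContinuousMultilinearMap R E F where
  toMultilinearMap := T.toMultilinearMap.extendAlong hf fun i => ψ i
  cont := by
    change Continuous fun y : ∀ i, E i =>
      (∏ i ∈ univ.filter (· ∉ Set.range f), ψ i (y i) : R) • (T fun l => y (f l) : F)
    fun_prop

theorem extendAlong_apply (T : ContinuousMultilinearMap R (fun l => E (f l)) F) (hf : Injective f)
    (ψ : ∀ i, E i →L[R] R) (y : ∀ i, E i) :
    T.extendAlong hf ψ y = (∏ i ∈ univ.filter (· ∉ Set.range f), ψ i (y i)) • T fun l => y (f l) :=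
  rfl

theorem extendAlong_apply_of_forall_eq_one (T : ContinuousMultilinearMap R (fun l => E (f l)) F)
    (hf : Injective f) (ψ : ∀ i, E i →L[R] R) {y : ∀ i, E i}
    (hy : ∀ i ∉ Set.range f, ψ i (y i) = 1) :
    T.extendAlong hf ψ y = T fun l => y (f l) := by
  rw [extendAlong_apply, prod_congr rfl fun i hi => hy i (mem_filter.mp hi).2, prod_const_one,
    one_smul]

end ContinuousMultilinearMap

end ExtendAlong

theorem summing_of_lower_multilinear_general
    {𝕜 : Type*} [RCLike 𝕜] {n t : ℕ} (htn : t < n)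
    {E : Fin n → Type*}
    [∀ i, NormedAddCommGroup (E i)] [∀ i, NormedSpace 𝕜 (E i)]
    {F : Type*} [NormedAddCommGroup F] [NormedSpace 𝕜 F]
    (hnt : ∀ i : Fin n, t ≤ (i : ℕ) → ∃ v : E i, v ≠ 0)
    {r : ℝ} (s : Fin t → ℝ≥0∞)
    (hS : ∀ S : ContinuousMultilinearMap 𝕜 E F, ∀ x : ∀ i : Fin n, ℕ → E i,
      (∀ (i : Fin n) (hi : (i : ℕ) < t), MemWeakLp 𝕜 (s ⟨i, hi⟩) (x i)) →
      (∀ i : Fin n, t ≤ (i : ℕ) → ∃ M : ℝ, ∀ j, ‖x i j‖ ≤ M) →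
      Summable fun j => ‖S (fun i => x i j)‖ ^ r) :
    ∀ T : ContinuousMultilinearMap 𝕜 (fun l : Fin t => E (Fin.castLE htn.le l)) F,
      ∀ x : ∀ l : Fin t, ℕ → E (Fin.castLE htn.le l),
        (∀ l, MemWeakLp 𝕜 (s l) (x l)) →
        Summable fun j => ‖T (fun l => x l j)‖ ^ r := by
  intro T x hx
  have hrange (i : Fin n) : i ∉ Set.range (Fin.castLE htn.le) ↔ t ≤ (i : ℕ) := by
    simp [Fin.range_castLE]
  have hw (i : Fin n) : ∃ (w : E i) (ψ : E i →L[𝕜] 𝕜), t ≤ (i : ℕ) → ψ w = 1 := by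
    by_cases hi : t ≤ (i : ℕ)
    · obtain ⟨v, hv⟩ := hnt i hi
      obtain ⟨ψ, hψ⟩ := SeparatingDual.exists_eq_one (R := 𝕜) hv
      exact ⟨v, ψ, fun _ => hψ⟩
    · exact ⟨0, 0, fun h => absurd h hi⟩
  choose w ψ hψ using hw
  let x' (i : Fin n) (j : ℕ) : E i := if h : (i : ℕ) < t then x ⟨i, h⟩ j else w i
  have hS' := hS (T.extendAlong (Fin.castLE_injective htn.le) ψ) x'
    (fun i hi => by simpa only [x', dif_pos hi] using hx ⟨i, hi⟩)
    (fun i hi => ⟨‖w i‖, fun j => by simp [x', not_lt.mpr hi]⟩)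
  refine hS'.congr fun j => ?_
  rw [ContinuousMultilinearMap.extendAlong_apply_of_forall_eq_one]
  · simp only [x', Fin.val_castLE, Fin.is_lt, dite_true]
  · intro i hi
    rw [hrange] at hi
    simp only [x', dif_neg (not_lt.mpr hi), hψ i hi]

/-- Let `1 ≤ t < n`, `r > 0`, `s₁,…,s_t ∈ (0,∞]`, and suppose
`E_{t+1},…,Eₙ ≠ {0}`. If every continuous `n`-linear `S : E₁ × ⋯ × Eₙ → F` is absolutely
`(r;s₁,…,s_t,∞,…,∞)`-summing at the origin, then every continuous `t`-linear
`T : E₁ × ⋯ × E_t → F` is absolutely `(r;s₁,…,s_t)`-summing at the origin. -/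
theorem summing_of_lower_multilinear
    {𝕜 : Type*} [RCLike 𝕜] {n t : ℕ} (ht : 1 ≤ t) (htn : t < n)
    {E : Fin n → Type*}
    [∀ i, NormedAddCommGroup (E i)] [∀ i, NormedSpace 𝕜 (E i)] [∀ i, CompleteSpace (E i)]
    {F : Type*} [NormedAddCommGroup F] [NormedSpace 𝕜 F] [CompleteSpace F]
    (hnt : ∀ i : Fin n, t ≤ (i : ℕ) → ∃ v : E i, v ≠ 0)
    {r : ℝ} (hr : 0 < r) (s : Fin t → ℝ≥0∞) (hs : ∀ l, 0 < s l)
    (hS : ∀ S : ContinuousMultilinearMap 𝕜 E F, ∀ x : ∀ i : Fin n, ℕ → E i,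
      (∀ (i : Fin n) (hi : (i : ℕ) < t), MemWeakLp 𝕜 (s ⟨i, hi⟩) (x i)) →
      (∀ i : Fin n, t ≤ (i : ℕ) → ∃ M : ℝ, ∀ j, ‖x i j‖ ≤ M) →
      Summable fun j => ‖S (fun i => x i j)‖ ^ r) :
    ∀ T : ContinuousMultilinearMap 𝕜 (fun l : Fin t => E (Fin.castLE htn.le l)) F,
      ∀ x : ∀ l : Fin t, ℕ → E (Fin.castLE htn.le l),
        (∀ l, MemWeakLp 𝕜 (s l) (x l)) →
        Summable fun j => ‖T (fun l => x l j)‖ ^ r :=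
  summing_of_lower_multilinear_general htn hnt s hS
end
end

section
/- Let E₁,…,Eₙ,F be Banach spaces, 1 ≤ t < n, r > 0 and s₁,…,s_t ∈ (0,∞]. For a continuous n-linear mapping T : E₁×⋯×Eₙ → F the following are equivalent: (a) T is absolutely (r;s₁,…,s_t,∞,…,∞)-summing at the origin, i.e. ∑_j ‖T(x_j^{(1)},…,x_j^{(t)}, y_j^{(t+1)},…,y_j^{(n)})‖^r < ∞ whenever (x_j^{(i)}) ∈ ℓ_{s_i}^w(E_i) for i = 1,…,t and (y_j^{(i)}) is bounded in E_i for i = t+1,…,n; (b) the curried mapping T₁ : E₁×⋯×E_t → L(E_{t+1},…,Eₙ;F) is absolutely (r;s₁,…,s_t)-summing at the origin, i.e. for all (x_j^{(i)}) ∈ ℓ_{s_i}^w(E_i), i = 1,…,t, ∑_j ( sup{ ‖T(x_j^{(1)},…,x_j^{(t)}, y_{t+1},…,yₙ)‖ : ‖y_{t+1}‖ ≤ 1,…,‖yₙ‖ ≤ 1 } )^r < ∞. -/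
open scoped ENNReal NNReal

noncomputable section

/-- Let `n = t + m` with `1 ≤ t`, `1 ≤ m`, `r > 0`, `s₁,…,s_t ∈ (0,∞]`,
and let `T : E₁ × ⋯ × Eₙ → F` be continuous `n`-linear. Then `T` is absolutely
`(r;s₁,…,s_t,∞,…,∞)`-summing at the origin if and only if the curried map
`T₁ : E₁ × ⋯ × E_t → L(E_{t+1},…,Eₙ;F)` is absolutely `(r;s₁,…,s_t)`-summing at the origin,
where `‖T₁(x^{(1)},…,x^{(t)})‖` is the sup of `‖T(x^{(1)},…,x^{(t)},y_{t+1},…,yₙ)‖` over the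
unit balls. -/
theorem summing_iff_curried_summing
    {𝕜 : Type*} [RCLike 𝕜] {t m : ℕ} (ht : 1 ≤ t) (hm : 1 ≤ m)
    {E : Fin (t + m) → Type*}
    [∀ i, NormedAddCommGroup (E i)] [∀ i, NormedSpace 𝕜 (E i)] [∀ i, CompleteSpace (E i)]
    {F : Type*} [NormedAddCommGroup F] [NormedSpace 𝕜 F] [CompleteSpace F]
    {r : ℝ} (hr : 0 < r) (s : Fin t → ℝ≥0∞) (hs : ∀ l, 0 < s l)
    (T : ContinuousMultilinearMap 𝕜 E F) :
    (∀ x : ∀ l : Fin t, ℕ → E (Fin.castAdd m l), (∀ l, MemWeakLp 𝕜 (s l) (x l)) →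
      ∀ y : ∀ l : Fin m, ℕ → E (Fin.natAdd t l), (∀ l, ∃ M : ℝ, ∀ j, ‖y l j‖ ≤ M) →
        Summable fun j =>
          ‖T (fun i => Fin.addCases (fun l => x l j) (fun l => y l j) i)‖ ^ r) ↔
    (∀ x : ∀ l : Fin t, ℕ → E (Fin.castAdd m l), (∀ l, MemWeakLp 𝕜 (s l) (x l)) →
      Summable fun j =>
        (sSup {c : ℝ | ∃ y : ∀ l : Fin m, E (Fin.natAdd t l), (∀ l, ‖y l‖ ≤ 1) ∧
          c = ‖T (fun i => Fin.addCases (fun l => x l j) y i)‖}) ^ r) := by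

  classical
  -- The set of values for given `x` and `j`
  set S : (∀ l : Fin t, ℕ → E (Fin.castAdd m l)) → ℕ → Set ℝ := fun x j =>
    {c : ℝ | ∃ y : ∀ l : Fin m, E (Fin.natAdd t l), (∀ l, ‖y l‖ ≤ 1) ∧
      c = ‖T (fun i => Fin.addCases (fun l => x l j) y i)‖} with hS
  have hmem0 : ∀ x j, (0 : ℝ) ∈ S x j := by
    intro x j
    refine ⟨fun _ => 0, fun l => by simp, ?_⟩
    rw [eq_comm, norm_eq_zero]
    exact T.map_coord_zero (m := fun i => Fin.addCases (fun l => x l j) (fun _ => 0) i)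
      (Fin.natAdd t ⟨0, hm⟩) (by simp only [Fin.addCases_right])
  have hnonneg : ∀ x j, ∀ c ∈ S x j, (0:ℝ) ≤ c := by
    rintro x j c ⟨y, hy, rfl⟩; exact norm_nonneg _
  have hbdd : ∀ x j, BddAbove (S x j) := by
    intro x j
    refine ⟨‖T‖ * ∏ i : Fin (t + m), (Fin.addCases (motive := fun _ => ℝ) (fun l => ‖x l j‖) (fun _ : Fin m => (1:ℝ)) i), ?_⟩
    rintro c ⟨y, hy, rfl⟩
    refine le_trans (T.le_opNorm _) (mul_le_mul_of_nonneg_left ?_ (norm_nonneg T))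
    refine Finset.prod_le_prod (fun i _ => norm_nonneg _) (fun i _ => ?_)
    induction i using Fin.addCases with
    | left l => simp
    | right l => simpa using hy l
  have hsup_nonneg : ∀ x j, (0:ℝ) ≤ sSup (S x j) := fun x j =>
    Real.sSup_nonneg (hnonneg x j)
  constructor
  · intro ha x hx
    have key : ∀ j, ∃ y : ∀ l : Fin m, E (Fin.natAdd t l),
        (∀ l, ‖y l‖ ≤ 1) ∧
        sSup (S x j) ≤ 2 * ‖T (fun i => Fin.addCases (fun l => x l j) y i)‖ := by
      intro j
      rcases eq_or_lt_of_le (hsup_nonneg x j) with h0 | hpos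
      · obtain ⟨y, hy, hc⟩ := hmem0 x j
        exact ⟨y, hy, by rw [← h0, ← hc]; positivity⟩
      · have hlt : sSup (S x j) / 2 < sSup (S x j) := by linarith
        obtain ⟨c, hc, hlt2⟩ := exists_lt_of_lt_csSup ⟨0, hmem0 x j⟩ hlt
        obtain ⟨y, hy, rfl⟩ := hc
        exact ⟨y, hy, by linarith⟩
    choose y hy1 hy2 using key
    have hsum := ha x hx (fun l j => y j l) (fun l => ⟨1, fun j => hy1 j l⟩)
    refine Summable.of_nonneg_of_le (fun j => Real.rpow_nonneg (hsup_nonneg x j) r)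
      (fun j => ?_) (hsum.mul_left ((2:ℝ) ^ r))
    calc sSup (S x j) ^ r
        ≤ (2 * ‖T (fun i => Fin.addCases (fun l => x l j) (fun l => y j l) i)‖) ^ r :=
          Real.rpow_le_rpow (hsup_nonneg x j) (hy2 j) hr.le
      _ = 2 ^ r * ‖T (fun i => Fin.addCases (fun l => x l j) (fun l => y j l) i)‖ ^ r :=
          Real.mul_rpow (by norm_num) (norm_nonneg _)
  · intro hb x hx y hy
    choose M hM using hy
    set M' : Fin m → ℝ := fun l => max (M l) 1 with hM'
    have hM'pos : ∀ l, (0:ℝ) < M' l := fun l => lt_of_lt_of_le one_pos (le_max_right _ _)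
    set c : ∀ i : Fin (t + m), 𝕜 :=
      fun i => Fin.addCases (fun _ => (1:𝕜)) (fun l => ((M' l : ℝ) : 𝕜)) i with hc
    set z : ∀ l : Fin m, ℕ → E (Fin.natAdd t l) :=
      fun l j => (((M' l)⁻¹ : ℝ) : 𝕜) • y l j with hz
    have hz1 : ∀ l j, ‖z l j‖ ≤ 1 := by
      intro l j
      rw [hz]
      simp only [norm_smul, RCLike.norm_ofReal, abs_of_nonneg (inv_nonneg.2 (hM'pos l).le)]
      rw [inv_mul_le_iff₀ (hM'pos l), mul_one]
      exact le_trans (hM l j) (le_max_left _ _)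
    set v : ℕ → ∀ i, E i := fun j i =>
      Fin.addCases (motive := fun i => E i) (fun l => x l j) (fun l => z l j) i with hv
    have heq : ∀ j, (fun i => Fin.addCases (fun l => x l j) (fun l => y l j) i)
        = fun i => c i • v j i := by
      intro j
      funext i
      induction i using Fin.addCases with
      | left l => simp [hc, hv]
      | right l =>
        simp only [Fin.addCases_right, hc, hv, hz, smul_smul, ← RCLike.ofReal_mul]
        rw [mul_inv_cancel₀ (hM'pos l).ne']
        simp
    have hmemz : ∀ j, ‖T (v j)‖ ∈ S x j :=
      fun j => ⟨fun l => z l j, fun l => hz1 l j, rfl⟩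
    set K : ℝ := ‖∏ i, c i‖ with hK
    have hKnn : 0 ≤ K := norm_nonneg _
    have hnorm : ∀ j, ‖T (fun i => Fin.addCases (fun l => x l j) (fun l => y l j) i)‖
        ≤ K * sSup (S x j) := by
      intro j
      rw [heq j, T.map_smul_univ, norm_smul]
      exact mul_le_mul_of_nonneg_left (le_csSup (hbdd x j) (hmemz j)) hKnn
    have hsum := (hb x hx).mul_left (K ^ r)
    refine Summable.of_nonneg_of_le (fun j => Real.rpow_nonneg (norm_nonneg _) r)
      (fun j => ?_) hsum
    calc ‖T (fun i => Fin.addCases (fun l => x l j) (fun l => y l j) i)‖ ^ r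
        ≤ (K * sSup (S x j)) ^ r := Real.rpow_le_rpow (norm_nonneg _) (hnorm j) hr.le
      _ = K ^ r * sSup (S x j) ^ r := Real.mul_rpow hKnn (hsup_nonneg x j)
end
end

section
/- Let E₁, E₂, F be Banach spaces and 1 ≤ s < r < ∞. If a continuous bilinear mapping T : E₁×E₂ → F is absolutely (s;s,∞)-summing at the origin (∑_j ‖T(x_j,y_j)‖^s < ∞ whenever (x_j) ∈ ℓ_s^w(E₁) and (y_j) is bounded in E₂), then T is absolutely (r;r,∞)-summing at the origin (∑_j ‖T(x_j,y_j)‖^r < ∞ whenever (x_j) ∈ ℓ_r^w(E₁) and (y_j) is bounded in E₂). -/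
open scoped ENNReal NNReal

noncomputable section

/-!
By the closed graph theorem, a weakly `r`-summable sequence `(x_j)` satisfies
`∑ |φ x_j|^r ≤ W ‖φ‖^r`. Gluing rescaled counterexamples shows that summability at the origin
forces the inequality `∑ ‖T (x_j, y_j)‖^s ≤ C` whenever `∑ |φ x_j|^s ≤ ‖φ‖^s` for all `φ` and
`‖y_j‖ ≤ M`. On a finite block put `b_j = ‖T (x_j, y_j)‖^s` and `p = r / s`, and apply the
inequality to `λ_j^{1/s} x_j` with `λ_j` proportional to `b_j^{p-1}`, the weights extremal for
Hölder's inequality: Hölder makes the rescaled sequence admissible, and the conclusion reads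
`∑ b_j^p ≤ C^p W`, uniformly in the block.
-/

open Real Finset

section

variable {𝕜 : Type*} [RCLike 𝕜] {E E₁ E₂ F : Type*} [NormedAddCommGroup E] [NormedSpace 𝕜 E]
  [NormedAddCommGroup E₁] [NormedSpace 𝕜 E₁] [NormedAddCommGroup E₂] [NormedSpace 𝕜 E₂]
  [NormedAddCommGroup F] [NormedSpace 𝕜 F]

namespace WeaklySummable

variable {x : ℕ → E}

def toLp {p : ℝ≥0∞} (hx : WeaklySummable 𝕜 p.toReal x) :
    (E →L[𝕜] 𝕜) →ₗ[𝕜] lp (fun _ : ℕ => 𝕜) p where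
  toFun φ := ⟨fun j => φ (x j), memℓp_gen (hx φ)⟩
  map_add' _ _ := rfl
  map_smul' _ _ := rfl

theorem continuous_toLp {p : ℝ≥0∞} [Fact (1 ≤ p)] (hx : WeaklySummable 𝕜 p.toReal x) :
    Continuous hx.toLp := by
  refine hx.toLp.continuous_of_seq_closed_graph fun u φ v hu hv => lp.ext <| funext fun j => ?_
  refine tendsto_nhds_unique (((lp.lipschitzWith_one_eval _ j).continuous.tendsto v).comp hv) ?_
  exact ((ContinuousLinearMap.apply 𝕜 𝕜 (x j)).continuous.tendsto φ).comp hu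

theorem exists_tsum_rpow_le_s15 {q : ℝ} (hq : 1 ≤ q) (hx : WeaklySummable 𝕜 q x) :
    ∃ W, ∀ φ : E →L[𝕜] 𝕜, ∑' j, ‖φ (x j)‖ ^ q ≤ W * ‖φ‖ ^ q := by
  obtain ⟨p, hp, rfl⟩ : ∃ p : ℝ≥0∞, 1 ≤ p ∧ p.toReal = q :=
    ⟨ENNReal.ofReal q, ENNReal.one_le_ofReal.mpr hq, ENNReal.toReal_ofReal (zero_le_one.trans hq)⟩
  have : Fact (1 ≤ p) := ⟨hp⟩
  let L : (E →L[𝕜] 𝕜) →L[𝕜] lp (fun _ : ℕ => 𝕜) p := ⟨hx.toLp, hx.continuous_toLp⟩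
  refine ⟨‖L‖ ^ p.toReal, fun φ => ?_⟩
  calc ∑' j, ‖φ (x j)‖ ^ p.toReal = ‖L φ‖ ^ p.toReal :=
        (lp.norm_rpow_eq_tsum (zero_lt_one.trans_le hq) (L φ)).symm
    _ ≤ (‖L‖ * ‖φ‖) ^ p.toReal :=
        Real.rpow_le_rpow (norm_nonneg _) (L.le_opNorm φ) ENNReal.toReal_nonneg
    _ = _ := Real.mul_rpow L.opNorm_nonneg (norm_nonneg _)

end WeaklySummable

theorem sum_rpow_le_of_forall_sum_mul_le {ι κ : Type*} {S : Finset κ} {p W C : ℝ} (hp : 1 < p)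
    (hW : 0 < W) {α : ι → κ → ℝ} {m : ι → ℝ} {β : κ → ℝ} (hα : ∀ i j, 0 ≤ α i j)
    (hm : ∀ i, 0 ≤ m i) (hβ : ∀ j, 0 ≤ β j) (hαW : ∀ i, ∑ j ∈ S, α i j ^ p ≤ W * m i ^ p)
    (hC : ∀ c : κ → ℝ, (∀ j, 0 ≤ c j) → (∀ i, ∑ j ∈ S, c j * α i j ≤ m i) →
      ∑ j ∈ S, c j * β j ≤ C) :
    ∑ j ∈ S, β j ^ p ≤ C ^ p * W := by
  set q := p.conjExponent
  have hpq : p.HolderConjugate q := .conjExponent hp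
  have hC0 : 0 ≤ C := by simpa using hC 0 (fun _ => le_rfl) (fun i => by simpa using hm i)
  set A := ∑ j ∈ S, β j ^ p with hAdef
  have hA0 : 0 ≤ A := sum_nonneg fun j _ => rpow_nonneg (hβ j) p
  rcases hA0.eq_or_lt with hA | hA
  · rw [← hA]; positivity
  set B := A ^ (1 / q) * W ^ (1 / p)
  have hB : 0 < B := by positivity
  -- test `hC` against the weights `β^(p-1) / B` that are extremal for Hölder's inequality
  have hdual : A / B ≤ C := by
    refine le_of_eq_of_le ?_ (hC (fun j => B⁻¹ * β j ^ (p - 1))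
      (fun j => mul_nonneg (inv_nonneg.2 hB.le) (rpow_nonneg (hβ j) _)) fun i => ?_)
    · rw [div_eq_inv_mul, hAdef, mul_sum]
      refine sum_congr rfl fun j _ => ?_
      rw [mul_assoc, ← rpow_add_one' (hβ j) (by linarith), sub_add_cancel]
    · have hβpq : ∀ j, (β j ^ (p - 1)) ^ q = β j ^ p := fun j => by
        rw [← rpow_mul (hβ j), hpq.sub_one_mul_conj]
      calc ∑ j ∈ S, B⁻¹ * β j ^ (p - 1) * α i j = B⁻¹ * ∑ j ∈ S, β j ^ (p - 1) * α i j := by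
            simp only [mul_sum, mul_assoc]
        _ ≤ B⁻¹ * (A ^ (1 / q) * (W * m i ^ p) ^ (1 / p)) := by
            gcongr
            refine (inner_le_Lp_mul_Lq_of_nonneg S hpq.symm (fun j _ => rpow_nonneg (hβ j) _)
              fun j _ => hα i j).trans ?_
            simp only [hβpq]
            gcongr
            · exact sum_nonneg fun j _ => rpow_nonneg (hα i j) _
            · exact hαW i
        _ = m i := by
            rw [mul_rpow hW.le (rpow_nonneg (hm i) _), ← rpow_mul (hm i),
              mul_one_div_cancel hpq.ne_zero, rpow_one, ← mul_assoc (A ^ (1 / q))]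
            exact inv_mul_cancel_left₀ hB.ne' _
  have hsplit : A = A ^ (1 / p) * A ^ (1 / q) := by
    rw [← rpow_add hA, one_div, one_div, hpq.inv_add_inv_eq_one, rpow_one]
  have hroot : A ^ (1 / p) ≤ C * W ^ (1 / p) := by
    rw [div_le_iff₀ hB, hsplit] at hdual
    refine le_of_mul_le_mul_right (hdual.trans_eq ?_) (rpow_pos_of_pos hA _)
    simp only [B]
    ring
  calc A = (A ^ (1 / p)) ^ p := by rw [← rpow_mul hA.le, one_div_mul_cancel hpq.ne_zero, rpow_one]
    _ ≤ (C * W ^ (1 / p)) ^ p := rpow_le_rpow (by positivity) hroot (by linarith)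
    _ = C ^ p * W := by
      rw [mul_rpow hC0 (by positivity), ← rpow_mul hW.le, one_div_mul_cancel hpq.ne_zero, rpow_one]

theorem norm_smul_rpow_inv_rpow {c s : ℝ} (hc : 0 ≤ c) (hs : s ≠ 0) (v : E) :
    ‖((c ^ s⁻¹ : ℝ) : 𝕜) • v‖ ^ s = c * ‖v‖ ^ s := by
  rw [norm_smul, RCLike.norm_ofReal, abs_of_nonneg (rpow_nonneg hc _),
    mul_rpow (rpow_nonneg hc _) (norm_nonneg _), rpow_inv_rpow hc hs]

variable (𝕜) in
/-- `T` is absolutely `(s; s, ∞)`-summing at the origin. -/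
def IsSummingAtOrigin (s : ℝ) (T : E₁ →L[𝕜] E₂ →L[𝕜] F) : Prop :=
  ∀ x : ℕ → E₁, WeaklySummable 𝕜 s x → ∀ y : ℕ → E₂, (∃ M : ℝ, ∀ j, ‖y j‖ ≤ M) →
    Summable fun j => ‖T (x j) (y j)‖ ^ s

theorem IsSummingAtOrigin.exists_tsum_rpow_le_s15 {s : ℝ} (hs : 0 < s) {T : E₁ →L[𝕜] E₂ →L[𝕜] F}
    (hT : IsSummingAtOrigin 𝕜 s T) (M : ℝ) :
    ∃ C, ∀ x : ℕ → E₁, WeaklySummable 𝕜 s x →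
      (∀ φ : E₁ →L[𝕜] 𝕜, ∑' j, ‖φ (x j)‖ ^ s ≤ ‖φ‖ ^ s) →
      ∀ y : ℕ → E₂, (∀ j, ‖y j‖ ≤ M) → ∑' j, ‖T (x j) (y j)‖ ^ s ≤ C := by
  -- Counterexamples with sums `> 2^k`, scaled by `2^(-k/s)` and glued together, would give a
  -- weakly `s`-summable sequence whose image has infinitely many blocks of sum `> 1`.
  by_contra! h
  choose x hx hxφ y hy hxy using fun k : ℕ => h (2 ^ k)
  have hε : ∀ k : ℕ, (0 : ℝ) ≤ (1 / 2) ^ k := fun k => by positivity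
  let X : ℕ × ℕ → E₁ := fun kj => ((((1 / 2) ^ kj.1 : ℝ) ^ s⁻¹ : ℝ) : 𝕜) • x kj.1 kj.2
  let e := Nat.pairEquiv.symm
  have hX : WeaklySummable 𝕜 s (X ∘ e) := fun φ => by
    refine (e.summable_iff (f := fun kj => ‖φ (X kj)‖ ^ s)).2
      ((summable_prod_of_nonneg fun _ => by positivity).2 ⟨fun k => ?_, ?_⟩)
    · simpa only [X, map_smul, norm_smul_rpow_inv_rpow (hε k) hs.ne'] using (hx k φ).mul_left _
    · refine (summable_geometric_two.mul_right (‖φ‖ ^ s)).of_nonneg_of_le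
        (fun _ => tsum_nonneg fun _ => by positivity) fun k => ?_
      simp only [X, map_smul, norm_smul_rpow_inv_rpow (hε k) hs.ne', tsum_mul_left]
      exact mul_le_mul_of_nonneg_left (hxφ k φ) (hε k)
  have hXY := hT (X ∘ e) hX (fun n => y (e n).1 (e n).2) ⟨M, fun n => hy _ _⟩
  have hrows := ((summable_prod_of_nonneg fun _ => by positivity).1
    ((e.summable_iff (f := fun kj => ‖T (X kj) (y kj.1 kj.2)‖ ^ s)).1 hXY)).2
  obtain ⟨k, hk⟩ := (hrows.tendsto_atTop_zero.eventually_lt_const one_pos).exists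
  simp only [X, map_smul, smul_apply, norm_smul_rpow_inv_rpow (hε k) hs.ne',
    tsum_mul_left] at hk
  have hk1 : (1 / 2 : ℝ) ^ k * 2 ^ k = 1 := by rw [← mul_pow]; norm_num
  linarith [mul_lt_mul_of_pos_left (hxy k) (by positivity : (0 : ℝ) < (1 / 2) ^ k)]

theorem IsSummingAtOrigin.exists_sum_mul_le {s : ℝ} (hs : 0 < s) {T : E₁ →L[𝕜] E₂ →L[𝕜] F}
    (hT : IsSummingAtOrigin 𝕜 s T) (M : ℝ) :
    ∃ C, ∀ (S : Finset ℕ) (c : ℕ → ℝ), (∀ j, 0 ≤ c j) → ∀ x : ℕ → E₁,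
      (∀ φ : E₁ →L[𝕜] 𝕜, ∑ j ∈ S, c j * ‖φ (x j)‖ ^ s ≤ ‖φ‖ ^ s) →
      ∀ y : ℕ → E₂, (∀ j, ‖y j‖ ≤ M) → ∑ j ∈ S, c j * ‖T (x j) (y j)‖ ^ s ≤ C := by
  obtain ⟨C, hC⟩ := hT.exists_tsum_rpow_le_s15 hs M
  refine ⟨C, fun S c hc x hx y hy => ?_⟩
  let d : ℕ → ℝ := fun j => if j ∈ S then c j else 0
  have hd : ∀ j, 0 ≤ d j := fun j => by by_cases hj : j ∈ S <;> simp [d, hj, hc j]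
  have hdS : ∀ f : ℕ → ℝ, ∑' j, d j * f j = ∑ j ∈ S, c j * f j := fun f => by
    rw [tsum_eq_sum (s := S) fun j hj => by simp [d, hj]]
    exact sum_congr rfl fun j hj => by simp [d, hj]
  let u : ℕ → E₁ := fun j => ((d j ^ s⁻¹ : ℝ) : 𝕜) • x j
  have hu_weak : WeaklySummable 𝕜 s u := fun φ => by
    simpa only [u, map_smul, norm_smul_rpow_inv_rpow (hd _) hs.ne'] using
      summable_of_ne_finset_zero (s := S) fun j hj => by simp [d, hj]
  have := hC u hu_weak (fun φ => by
    simpa only [u, map_smul, norm_smul_rpow_inv_rpow (hd _) hs.ne', hdS] using hx φ) y hy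
  simpa only [u, map_smul, smul_apply, norm_smul_rpow_inv_rpow (hd _) hs.ne', hdS] using this

end

theorem bilinear_inclusion_summing_general
    {𝕜 : Type*} [RCLike 𝕜] {E₁ E₂ F : Type*}
    [NormedAddCommGroup E₁] [NormedSpace 𝕜 E₁]
    [NormedAddCommGroup E₂] [NormedSpace 𝕜 E₂]
    [NormedAddCommGroup F] [NormedSpace 𝕜 F]
    {r s : ℝ} (hs : 1 ≤ s) (hsr : s < r)
    (T : E₁ →L[𝕜] E₂ →L[𝕜] F)
    (hT : ∀ x : ℕ → E₁, WeaklySummable 𝕜 s x →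
      ∀ y : ℕ → E₂, (∃ M : ℝ, ∀ j, ‖y j‖ ≤ M) →
        Summable fun j => ‖T (x j) (y j)‖ ^ s) :
    ∀ x : ℕ → E₁, WeaklySummable 𝕜 r x →
      ∀ y : ℕ → E₂, (∃ M : ℝ, ∀ j, ‖y j‖ ≤ M) →
        Summable fun j => ‖T (x j) (y j)‖ ^ r := by
  intro x hx y ⟨M, hM⟩
  have hs0 : 0 < s := zero_lt_one.trans_le hs
  have hpow : ∀ a : ℝ, 0 ≤ a → (a ^ s) ^ (r / s) = a ^ r := fun a ha => by
    rw [← rpow_mul ha, mul_div_cancel₀ _ hs0.ne']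
  obtain ⟨W, hW⟩ := hx.exists_tsum_rpow_le_s15 (hs.trans hsr.le)
  obtain ⟨C, hC⟩ := IsSummingAtOrigin.exists_sum_mul_le hs0 hT M
  refine summable_of_sum_le (c := C ^ (r / s) * max W 1) (fun j => by positivity) fun S => ?_
  have hαW : ∀ φ : E₁ →L[𝕜] 𝕜,
      ∑ j ∈ S, (‖φ (x j)‖ ^ s) ^ (r / s) ≤ max W 1 * (‖φ‖ ^ s) ^ (r / s) := by
    intro φ
    simp only [hpow _ (norm_nonneg _)]
    calc ∑ j ∈ S, ‖φ (x j)‖ ^ r ≤ ∑' j, ‖φ (x j)‖ ^ r :=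
          (hx φ).sum_le_tsum S fun j _ => by positivity
      _ ≤ W * ‖φ‖ ^ r := hW φ
      _ ≤ max W 1 * ‖φ‖ ^ r := by gcongr; exact le_max_left _ _
  have := sum_rpow_le_of_forall_sum_mul_le ((one_lt_div hs0).2 hsr) (lt_max_of_lt_right one_pos)
    (fun φ j => by positivity) (fun φ => by positivity) (fun j => by positivity) hαW
    fun c hc hcx => hC S c hc x hcx y hM
  simpa only [hpow _ (norm_nonneg _)] using this

/-- (Inclusion for bilinear mappings.) Let `1 ≤ s < r < ∞`. If a continuous
bilinear `T : E₁ × E₂ → F` is absolutely `(s;s,∞)`-summing at the origin, then it is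
absolutely `(r;r,∞)`-summing at the origin. -/
theorem bilinear_inclusion_summing
    {𝕜 : Type*} [RCLike 𝕜] {E₁ E₂ F : Type*}
    [NormedAddCommGroup E₁] [NormedSpace 𝕜 E₁] [CompleteSpace E₁]
    [NormedAddCommGroup E₂] [NormedSpace 𝕜 E₂] [CompleteSpace E₂]
    [NormedAddCommGroup F] [NormedSpace 𝕜 F] [CompleteSpace F]
    {r s : ℝ} (hs : 1 ≤ s) (hsr : s < r)
    (T : E₁ →L[𝕜] E₂ →L[𝕜] F)
    (hT : ∀ x : ℕ → E₁, WeaklySummable 𝕜 s x →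
      ∀ y : ℕ → E₂, (∃ M : ℝ, ∀ j, ‖y j‖ ≤ M) →
        Summable fun j => ‖T (x j) (y j)‖ ^ s) :
    ∀ x : ℕ → E₁, WeaklySummable 𝕜 r x →
      ∀ y : ℕ → E₂, (∃ M : ℝ, ∀ j, ‖y j‖ ≤ M) →
        Summable fun j => ‖T (x j) (y j)‖ ^ r :=
  bilinear_inclusion_summing_general hs hsr T hT
end
end

section
/- Let E₁,…,Eₙ,F be Banach spaces, n ≥ 2 and p ≥ 1, and let T : E₁×⋯×Eₙ → F be a p-dominated continuous n-linear mapping, i.e. T is absolutely (p/n; p,…,p)-summing at the origin. Then for every r ≥ p, T is absolutely (r/(n−1); r,…,r,∞)-summing at the origin: ∑_j ‖T(x_j^{(1)},…,x_j^{(n−1)}, y_j)‖^{r/(n−1)} < ∞ whenever (x_j^{(s)}) ∈ ℓ_r^w(E_s) for s = 1,…,n−1 and (y_j) is a bounded sequence in Eₙ. -/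
open scoped ENNReal NNReal
open Filter Finset Topology

noncomputable section

/-- Weighted AM-GM comparison: if `u, v` are summable nonneg, `θ ∈ [0,1]`,
then `u^θ * v^(1-θ)` is summable. -/
lemma summable_rpow_mul_rpow {u v : ℕ → ℝ} (hu0 : ∀ j, 0 ≤ u j) (hv0 : ∀ j, 0 ≤ v j)
    (hu : Summable u) (hv : Summable v) {θ₁ θ₂ : ℝ} (hθ1 : 0 ≤ θ₁) (hθ2 : 0 ≤ θ₂)
    (hθ : θ₁ + θ₂ = 1) :
    Summable fun j => u j ^ θ₁ * v j ^ θ₂ := by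
  refine Summable.of_nonneg_of_le
    (fun j => mul_nonneg (Real.rpow_nonneg (hu0 j) _) (Real.rpow_nonneg (hv0 j) _))
    (fun j => ?_) ((hu.mul_left θ₁).add (hv.mul_left θ₂))
  exact Real.geom_mean_le_arith_mean2_weighted hθ1 hθ2 (hu0 j) (hv0 j) hθ

/-- Key inequality for Abel–Dini: `0 < a ≤ c`, `0 < ε ≤ 1` implies
`(c - a)/c^(1+ε) ≤ (a^(-ε) - c^(-ε))/ε`. -/
lemma abel_dini_key {a c ε : ℝ} (ha : 0 < a) (hac : a ≤ c) (hε : 0 < ε) (hε1 : ε ≤ 1) :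
    (c - a) / c ^ (1 + ε) ≤ (a ^ (-ε) - c ^ (-ε)) / ε := by
  have hc : 0 < c := lt_of_lt_of_le ha hac
  set u : ℝ := a / c with hu
  have hu0 : 0 < u := div_pos ha hc
  have hu1 : u ≤ 1 := (div_le_one hc).2 hac
  -- u^ε ≤ ε*u + (1-ε)
  have h1 : u ^ ε ≤ ε * u + (1 - ε) := by
    have := Real.geom_mean_le_arith_mean2_weighted (w₁ := ε) (w₂ := 1 - ε) (p₁ := u)
      (p₂ := 1) hε.le (by linarith) hu0.le zero_le_one (by ring)
    simpa using this
  have huε : 0 < u ^ ε := Real.rpow_pos_of_pos hu0 _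
  have huε1 : u ^ ε ≤ 1 := Real.rpow_le_one hu0.le hu1 hε.le
  -- ε*(1-u) ≤ u^(-ε) - 1
  have h2 : ε * (1 - u) ≤ u ^ (-ε) - 1 := by
    have hA : ε * (1 - u) ≤ 1 - u ^ ε := by linarith
    have hB : 1 - u ^ ε ≤ (1 - u ^ ε) / u ^ ε := by
      rw [le_div_iff₀ huε]
      nlinarith [sub_nonneg.2 huε1]
    have hC : (1 - u ^ ε) / u ^ ε = u ^ (-ε) - 1 := by
      rw [Real.rpow_neg hu0.le]
      field_simp
    linarith
  -- multiply by c^(-ε)/ε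
  have hcε : 0 < c ^ (-ε) := Real.rpow_pos_of_pos hc _
  have key : (1 - u) * c ^ (-ε) ≤ (u ^ (-ε) * c ^ (-ε) - c ^ (-ε)) / ε := by
    rw [le_div_iff₀ hε]
    nlinarith [mul_le_mul_of_nonneg_right h2 hcε.le]
  have huc : u ^ (-ε) * c ^ (-ε) = a ^ (-ε) := by
    rw [← Real.mul_rpow hu0.le hc.le, hu, div_mul_cancel₀ _ (ne_of_gt hc)]
  rw [huc] at key
  have hεpow : (0:ℝ) < c ^ ε := Real.rpow_pos_of_pos hc _
  have hlhs : (c - a) / c ^ (1 + ε) = (1 - u) * c ^ (-ε) := by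
    rw [Real.rpow_neg hc.le, Real.rpow_add hc, Real.rpow_one, hu]
    field_simp
  rw [hlhs]
  exact key

/-- Abel–Dini: convergence part. -/
lemma abel_dini_summable {b : ℕ → ℝ} (hb : ∀ j, 0 ≤ b j)
    (htop : Tendsto (fun j => ∑ i ∈ Finset.range (j + 1), b i) atTop atTop)
    {ε : ℝ} (hε : 0 < ε) (hε1 : ε ≤ 1) :
    Summable fun j => b j / (∑ i ∈ Finset.range (j + 1), b i) ^ (1 + ε) := by
  set σ : ℕ → ℝ := fun j => ∑ i ∈ Finset.range (j + 1), b i with hσdef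
  have hσ0 : ∀ j, 0 ≤ σ j := fun j => Finset.sum_nonneg fun i _ => hb i
  have hσmono : Monotone σ := fun i j hij =>
    Finset.sum_le_sum_of_subset_of_nonneg (Finset.range_subset_range.2 (by omega))
      (fun k _ _ => hb k)
  obtain ⟨N, hN⟩ := Filter.eventually_atTop.mp (htop.eventually_ge_atTop 1)
  have hσN : (1:ℝ) ≤ σ N := hN N le_rfl
  rw [← summable_nat_add_iff (N + 1)]
  have hpos : ∀ j, 0 < σ (j + N) := fun j =>
    lt_of_lt_of_le one_pos (le_trans hσN (hσmono (by omega)))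
  have hterm0 : ∀ k, b (k + 1) = σ (k + 1) - σ k := by
    intro k
    simp only [hσdef]
    rw [Finset.sum_range_succ]
    ring
  have hterm : ∀ j, b (j + (N + 1)) = σ (j + (N + 1)) - σ (j + N) := by
    intro j
    have e : j + (N + 1) = (j + N) + 1 := by omega
    rw [e]
    exact hterm0 (j + N)
  show Summable fun j => b (j + (N + 1)) / σ (j + (N + 1)) ^ (1 + ε)
  set g : ℕ → ℝ := fun j => (σ (j + N) ^ (-ε) - σ (j + N + 1) ^ (-ε)) / ε with hgdef
  have hg0 : ∀ j, 0 ≤ g j := by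
    intro j
    have h := Real.rpow_le_rpow_of_nonpos (hpos j) (hσmono (Nat.le_succ (j + N)))
      (neg_nonpos.2 hε.le)
    have h2 : 0 ≤ σ (j + N) ^ (-ε) - σ (j + N + 1) ^ (-ε) := by linarith
    exact div_nonneg h2 hε.le
  have hgsum : Summable g := by
    refine summable_of_sum_range_le (c := σ N ^ (-ε) / ε) hg0 (fun n => ?_)
    have htel : ∑ j ∈ Finset.range n, g j = (σ (0 + N) ^ (-ε) - σ (n + N) ^ (-ε)) / ε := by
      simp only [hgdef]
      rw [← Finset.sum_div]
      congr 1
      have e : ∀ i : ℕ, i + N + 1 = i + 1 + N := fun i => by omega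
      simp only [e]
      exact Finset.sum_range_sub' (f := fun j => σ (j + N) ^ (-ε)) n
    rw [htel]
    have h1 : 0 ≤ σ (n + N) ^ (-ε) := Real.rpow_nonneg (hσ0 _) _
    have h2 : σ (0 + N) ^ (-ε) - σ (n + N) ^ (-ε) ≤ σ N ^ (-ε) := by
      simp only [Nat.zero_add]
      linarith
    gcongr
  refine Summable.of_nonneg_of_le
    (fun j => div_nonneg (hb _) (Real.rpow_nonneg (hσ0 _) _)) (fun j => ?_) hgsum
  have h1 : j + (N + 1) = (j + N) + 1 := by omega
  have key := abel_dini_key (hpos j) (hσmono (Nat.le_succ (j + N))) hε hε1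
  rw [hterm j, h1]
  exact key

/-- Abel–Dini: divergence part. -/
lemma abel_dini_not_summable {b : ℕ → ℝ} (hb : ∀ j, 0 ≤ b j)
    (htop : Tendsto (fun j => ∑ i ∈ Finset.range (j + 1), b i) atTop atTop) :
    ¬ Summable fun j => b j / (∑ i ∈ Finset.range (j + 1), b i) := by
  intro hsum
  set σ : ℕ → ℝ := fun j => ∑ i ∈ Finset.range (j + 1), b i with hσdef
  set f : ℕ → ℝ := fun j => b j / σ j with hfdef
  have hσ0 : ∀ j, 0 ≤ σ j := fun j => Finset.sum_nonneg fun i _ => hb i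
  have hσmono : Monotone σ := fun i j hij =>
    Finset.sum_le_sum_of_subset_of_nonneg (Finset.range_subset_range.2 (by omega))
      (fun k _ _ => hb k)
  have hbσ : ∀ j, b j ≤ σ j := by
    intro j
    exact Finset.single_le_sum (f := b) (fun i _ => hb i)
      (Finset.self_mem_range_succ j)
  obtain ⟨L, hL⟩ := hsum
  have hP : Tendsto (fun n => ∑ i ∈ Finset.range n, f i) atTop (𝓝 L) :=
    hL.tendsto_sum_nat
  have hP1 : Tendsto (fun M => ∑ i ∈ Finset.range (M + 1), f i) atTop (𝓝 L) :=
    hP.comp (tendsto_add_atTop_nat 1)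
  have key : ∀ N, (∑ i ∈ Finset.range (N + 1), f i) + 1 ≤ L := by
    intro N
    have hev : ∀ᶠ M in atTop, 1 - σ N / σ M ≤
        (∑ i ∈ Finset.range (M + 1), f i) - (∑ i ∈ Finset.range (N + 1), f i) := by
      filter_upwards [htop.eventually_ge_atTop 1, eventually_ge_atTop N] with M hM1 hMN
      have hσM : 0 < σ M := lt_of_lt_of_le one_pos hM1
      have hsub : (∑ i ∈ Finset.range (M + 1), f i) - (∑ i ∈ Finset.range (N + 1), f i)
          = ∑ i ∈ Finset.Ico (N + 1) (M + 1), f i := by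
        rw [Finset.sum_Ico_eq_sub _ (by omega)]
      rw [hsub]
      have h1 : ∑ i ∈ Finset.Ico (N + 1) (M + 1), b i / σ M
          ≤ ∑ i ∈ Finset.Ico (N + 1) (M + 1), f i := by
        refine Finset.sum_le_sum fun i hi => ?_
        rcases eq_or_lt_of_le (hσ0 i) with h | h
        · have hbi : b i = 0 := le_antisymm (h ▸ hbσ i) (hb i)
          simp [hfdef, hbi]
        · have hiM : i ≤ M := by
            have := (Finset.mem_Ico.1 hi).2; omega
          exact div_le_div_of_nonneg_left (hb i) h (hσmono hiM)
      have h2 : ∑ i ∈ Finset.Ico (N + 1) (M + 1), b i / σ M = (σ M - σ N) / σ M := by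
        rw [← Finset.sum_div]
        congr 1
        rw [Finset.sum_Ico_eq_sub _ (by omega)]
      have h3 : (σ M - σ N) / σ M = 1 - σ N / σ M := by
        field_simp
      rw [h2, h3] at h1
      linarith
    have hlim1 : Tendsto (fun M => 1 - σ N / σ M) atTop (𝓝 1) := by
      have := (htop.const_div_atTop (σ N))
      simpa using (tendsto_const_nhds (x := (1:ℝ))).sub this
    have hlim2 : Tendsto
        (fun M => (∑ i ∈ Finset.range (M + 1), f i) - (∑ i ∈ Finset.range (N + 1), f i))
        atTop (𝓝 (L - ∑ i ∈ Finset.range (N + 1), f i)) :=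
      hP1.sub tendsto_const_nhds
    have := le_of_tendsto_of_tendsto hlim1 hlim2 hev
    linarith
  have hble : ∀ N, ∑ i ∈ Finset.range (N + 1), f i ≤ L - 1 := fun N => by linarith [key N]
  have : L ≤ L - 1 := le_of_tendsto hP1 (Filter.Eventually.of_forall hble)
  linarith



/-- Let `n = m + 1 ≥ 2`, `p ≥ 1`, and let `T : E₁ × ⋯ × Eₙ → F` be a
`p`-dominated continuous `n`-linear map, i.e. absolutely `(p/n;p,…,p)`-summing at the origin.
Then for every `r ≥ p`, `T` is absolutely `(r/(n−1);r,…,r,∞)`-summing at the origin. -/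
theorem dominated_implies_summing_with_infty
    {𝕜 : Type*} [RCLike 𝕜] {m : ℕ} (hm : 1 ≤ m) {E : Fin (m + 1) → Type*}
    [∀ i, NormedAddCommGroup (E i)] [∀ i, NormedSpace 𝕜 (E i)] [∀ i, CompleteSpace (E i)]
    {F : Type*} [NormedAddCommGroup F] [NormedSpace 𝕜 F] [CompleteSpace F]
    {p : ℝ} (hp : 1 ≤ p)
    (T : ContinuousMultilinearMap 𝕜 E F)
    (hT : ∀ x : ∀ i : Fin (m + 1), ℕ → E i, (∀ i, WeaklySummable 𝕜 p (x i)) →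
      Summable fun j => ‖T (fun i => x i j)‖ ^ (p / ((m : ℝ) + 1))) :
    ∀ r : ℝ, p ≤ r →
      ∀ x : ∀ l : Fin m, ℕ → E l.castSucc, (∀ l, WeaklySummable 𝕜 r (x l)) →
        ∀ y : ℕ → E (Fin.last m), (∃ M : ℝ, ∀ j, ‖y j‖ ≤ M) →
          Summable fun j => ‖T (Fin.snoc (fun l => x l j) (y j))‖ ^ (r / (m : ℝ)) := by
  intro r hr x hx y hy
  by_contra hcon
  obtain ⟨M, hM⟩ := hy
  have hm' : (1:ℝ) ≤ (m:ℝ) := by exact_mod_cast hm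
  have hm0 : (0:ℝ) < (m:ℝ) := by linarith
  have hm1 : (0:ℝ) < (m:ℝ) + 1 := by linarith
  have hp0 : (0:ℝ) < p := by linarith
  have hr0 : (0:ℝ) < r := by linarith
  have hM0 : (0:ℝ) ≤ M := le_trans (norm_nonneg (y 0)) (hM 0)
  set a : ℕ → ℝ := fun j => ‖T (Fin.snoc (fun l => x l j) (y j))‖ with hadef
  have ha0 : ∀ j, 0 ≤ a j := fun j => norm_nonneg _
  set b : ℕ → ℝ := fun j => a j ^ (r / (m:ℝ)) with hbdef
  have hb0 : ∀ j, 0 ≤ b j := fun j => Real.rpow_nonneg (ha0 j) _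
  set σ : ℕ → ℝ := fun j => ∑ i ∈ Finset.range (j + 1), b i with hσdef
  have hσ0 : ∀ j, 0 ≤ σ j := fun j => Finset.sum_nonneg fun i _ => hb0 i
  have hσtop : Tendsto σ atTop atTop := by
    have h1 : Tendsto (fun n => ∑ i ∈ Finset.range n, b i) atTop atTop :=
      (not_summable_iff_tendsto_nat_atTop_of_nonneg hb0).1 (fun hs => hcon hs)
    exact h1.comp (tendsto_add_atTop_nat 1)
  -- constants
  set K : ℝ := ((m:ℝ) + 1) - (m:ℝ) * p / r with hKdef
  have hmpr : (m:ℝ) * p / r ≤ (m:ℝ) := by rw [div_le_iff₀ hr0]; nlinarith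
  have hmpr0 : 0 < (m:ℝ) * p / r := div_pos (mul_pos hm0 hp0) hr0
  have hK0 : 0 < K := by rw [hKdef]; linarith
  set ε : ℝ := min 1 ((m:ℝ) * p / (r * K)) with hεdef
  have hε0 : 0 < ε := by
    rw [hεdef]
    exact lt_min one_pos (div_pos (mul_pos hm0 hp0) (mul_pos hr0 hK0))
  have hε1 : ε ≤ 1 := by rw [hεdef]; exact min_le_left _ _
  have hεK : (1 + ε) * K ≤ (m:ℝ) + 1 := by
    have h1 : ε ≤ (m:ℝ) * p / (r * K) := by rw [hεdef]; exact min_le_right _ _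
    have h2 : ε * K ≤ (m:ℝ) * p / r := by
      calc ε * K ≤ ((m:ℝ) * p / (r * K)) * K := by nlinarith
        _ = (m:ℝ) * p / r := by field_simp
    rw [hKdef]; nlinarith
  set w : ℕ → ℝ := fun j => b j / σ j ^ (1 + ε) with hwdef
  have hw0 : ∀ j, 0 ≤ w j := fun j => div_nonneg (hb0 j) (Real.rpow_nonneg (hσ0 j) _)
  have hwsum : Summable w := abel_dini_summable hb0 hσtop hε0 hε1
  set lam : ℕ → ℝ := fun j => w j ^ ((r - p) / (p * r)) with hlamdef
  set mu : ℕ → ℝ := fun j => w j ^ (1 / p) with hmudef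
  have hlam0 : ∀ j, 0 ≤ lam j := fun j => Real.rpow_nonneg (hw0 j) _
  have hmu0 : ∀ j, 0 ≤ mu j := fun j => Real.rpow_nonneg (hw0 j) _
  set X : ∀ i : Fin (m + 1), ℕ → E i := fun i j =>
    Fin.snoc (fun l : Fin m => ((lam j : ℝ) : 𝕜) • x l j) (((mu j : ℝ) : 𝕜) • y j) i
    with hXdef
  -- weak p-summability of the test sequences
  have hweak : ∀ i, WeaklySummable 𝕜 p (X i) := by
    intro i
    induction i using Fin.lastCases with
    | last =>
      intro φ
      have hXl : ∀ j, X (Fin.last m) j = ((mu j : ℝ) : 𝕜) • y j := fun j => by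
        rw [hXdef]; simp
      simp only [hXl]
      refine Summable.of_nonneg_of_le (fun j => Real.rpow_nonneg (norm_nonneg _) _)
        (fun j => ?_) (hwsum.mul_right ((‖φ‖ * M) ^ p))
      have h1 : ‖φ (((mu j : ℝ) : 𝕜) • y j)‖ = mu j * ‖φ (y j)‖ := by
        rw [map_smul, norm_smul, RCLike.norm_ofReal, abs_of_nonneg (hmu0 j)]
      rw [h1]
      have h2 : mu j * ‖φ (y j)‖ ≤ mu j * (‖φ‖ * M) := by
        refine mul_le_mul_of_nonneg_left ?_ (hmu0 j)
        calc ‖φ (y j)‖ ≤ ‖φ‖ * ‖y j‖ := φ.le_opNorm _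
          _ ≤ ‖φ‖ * M := mul_le_mul_of_nonneg_left (hM j) (norm_nonneg φ)
      calc (mu j * ‖φ (y j)‖) ^ p ≤ (mu j * (‖φ‖ * M)) ^ p :=
            Real.rpow_le_rpow (mul_nonneg (hmu0 j) (norm_nonneg _)) h2 hp0.le
        _ = mu j ^ p * (‖φ‖ * M) ^ p :=
            Real.mul_rpow (hmu0 j) (mul_nonneg (norm_nonneg _) hM0)
        _ = w j * (‖φ‖ * M) ^ p := by
            rw [hmudef]
            simp only []
            rw [← Real.rpow_mul (hw0 j), one_div, inv_mul_cancel₀ (ne_of_gt hp0),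
              Real.rpow_one]
    | cast l =>
      intro φ
      have hXl : ∀ j, X l.castSucc j = ((lam j : ℝ) : 𝕜) • x l j := fun j => by
        rw [hXdef]; simp
      simp only [hXl]
      have heq : ∀ j, ‖φ (((lam j : ℝ) : 𝕜) • x l j)‖ ^ p
          = w j ^ (1 - p / r) * (‖φ (x l j)‖ ^ r) ^ (p / r) := by
        intro j
        have h1 : ‖φ (((lam j : ℝ) : 𝕜) • x l j)‖ = lam j * ‖φ (x l j)‖ := by
          rw [map_smul, norm_smul, RCLike.norm_ofReal, abs_of_nonneg (hlam0 j)]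
        rw [h1, Real.mul_rpow (hlam0 j) (norm_nonneg _)]
        congr 1
        · rw [hlamdef]
          simp only []
          rw [← Real.rpow_mul (hw0 j)]
          congr 1
          field_simp
        · rw [← Real.rpow_mul (norm_nonneg _)]
          congr 1
          field_simp
      simp only [heq]
      refine summable_rpow_mul_rpow hw0 (fun j => Real.rpow_nonneg (norm_nonneg _) _)
        hwsum (hx l φ) ?_ ?_ (by ring)
      · have : p / r ≤ 1 := by rw [div_le_one hr0]; exact hr
        linarith
      · positivity
  have hTsum := hT X hweak
  -- compute the value of T on the test sequences
  have hcomb : ∀ j, lam j ^ m * mu j = w j ^ (K / p) := by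
    intro j
    rw [hlamdef, hmudef]
    simp only []
    rw [← Real.rpow_natCast (w j ^ ((r - p) / (p * r))) m, ← Real.rpow_mul (hw0 j),
      ← Real.rpow_add' (hw0 j) ?hne]
    case hne =>
      have : 0 < (r - p) / (p * r) * (m:ℝ) + 1 / p := by
        have h1 : 0 ≤ (r - p) / (p * r) := div_nonneg (by linarith) (by positivity)
        have h2 : 0 < 1 / p := by positivity
        nlinarith
      exact ne_of_gt this
    congr 1
    rw [hKdef]
    field_simp
    ring
  have hval : ∀ j, ‖T (fun i => X i j)‖ = lam j ^ m * mu j * a j := by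
    intro j
    have hfun : (fun i => X i j) = fun i =>
        (Fin.snoc (fun _ : Fin m => ((lam j : ℝ) : 𝕜)) ((mu j : ℝ) : 𝕜) : Fin (m+1) → 𝕜) i •
          (Fin.snoc (fun l => x l j) (y j) : ∀ i, E i) i := by
      funext i
      induction i using Fin.lastCases with
      | last => rw [hXdef]; simp
      | cast l => rw [hXdef]; simp
    rw [hfun, T.map_smul_univ, norm_smul]
    congr 1
    rw [Fin.prod_univ_castSucc]
    simp only [Fin.snoc_castSucc, Fin.snoc_last, Finset.prod_const, Finset.card_univ,
      Fintype.card_fin]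
    rw [norm_mul, norm_pow, RCLike.norm_ofReal, RCLike.norm_ofReal,
      abs_of_nonneg (hlam0 j), abs_of_nonneg (hmu0 j)]
  have hterm : ∀ j, (lam j ^ m * mu j * a j) ^ (p / ((m:ℝ) + 1))
      = b j / σ j ^ ((1 + ε) * K / ((m:ℝ) + 1)) := by
    intro j
    rw [hcomb j, Real.mul_rpow (Real.rpow_nonneg (hw0 j) _) (ha0 j),
      ← Real.rpow_mul (hw0 j)]
    have e1 : K / p * (p / ((m:ℝ) + 1)) = K / ((m:ℝ) + 1) := by field_simp
    rw [e1]
    have e2 : a j ^ (p / ((m:ℝ) + 1)) = b j ^ (1 - K / ((m:ℝ) + 1)) := by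
      rw [hbdef]
      simp only []
      rw [← Real.rpow_mul (ha0 j)]
      congr 1
      rw [hKdef]
      field_simp
      ring
    rw [e2, hwdef]
    simp only []
    rw [Real.div_rpow (hb0 j) (Real.rpow_nonneg (hσ0 j) _), ← Real.rpow_mul (hσ0 j),
      div_mul_eq_mul_div]
    have e3 : b j ^ (K / ((m:ℝ) + 1)) * b j ^ (1 - K / ((m:ℝ) + 1)) = b j := by
      rw [← Real.rpow_add' (hb0 j) (by norm_num : K / ((m:ℝ) + 1) + (1 - K / ((m:ℝ) + 1)) ≠ 0)]
      norm_num
    rw [e3]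
    congr 2
    ring
  simp only [hval, hterm] at hTsum
  -- conclude: contradiction with Abel–Dini divergence
  have hc1 : (1 + ε) * K / ((m:ℝ) + 1) ≤ 1 := by rw [div_le_one hm1]; exact hεK
  obtain ⟨N₀, hN₀⟩ := Filter.eventually_atTop.mp (hσtop.eventually_ge_atTop 1)
  have hcmp : Summable fun j => b (j + N₀) / σ (j + N₀) := by
    refine Summable.of_nonneg_of_le (fun j => div_nonneg (hb0 _) (hσ0 _)) (fun j => ?_)
      ((summable_nat_add_iff N₀).2 hTsum)
    have hσ1 : (1:ℝ) ≤ σ (j + N₀) := hN₀ (j + N₀) (by omega)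
    have hσpos : (0:ℝ) < σ (j + N₀) := lt_of_lt_of_le one_pos hσ1
    have hple : σ (j + N₀) ^ ((1 + ε) * K / ((m:ℝ) + 1)) ≤ σ (j + N₀) := by
      calc σ (j + N₀) ^ ((1 + ε) * K / ((m:ℝ) + 1)) ≤ σ (j + N₀) ^ (1:ℝ) :=
            Real.rpow_le_rpow_of_exponent_le hσ1 hc1
        _ = σ (j + N₀) := Real.rpow_one _
    exact div_le_div_of_nonneg_left (hb0 _) (Real.rpow_pos_of_pos hσpos _) hple
  exact abel_dini_not_summable hb0 hσtop ((summable_nat_add_iff N₀).1 hcmp)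
end
end

section
/- Let E, F be Banach spaces over 𝕂 = ℝ or ℂ, suppose F has cotype q ∈ [2,∞), and let g : E → F be analytic at a point a ∈ E. Then g is absolutely (q;1)-summing at a: ∑_j ‖g(a+x_j) − g(a)‖^q < ∞ for every sequence (x_j) ∈ ℓ₁^u(E). -/
/-!
Let `p` be the power series of `g` at `a`, fix `0 < ε` below its radius of convergence, and
discard an initial segment of `x` so that the weak `ℓ₁`-norm of the remaining tail is at most
`ε`. By Hahn–Banach, every combination `∑ c_j x_j` of the tail with `|c_j| ≤ 1` then has norm at
most `ε`. Averaging over random signs (a polarization argument, one variable at a time) upgrades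
this to `‖∑ c_j A(x_j, …, x_j)‖ ≤ ‖A‖ ε^n` for every continuous `n`-linear map `A`; summing over
the homogeneous terms of `p` bounds every signed sum `∑ ±(g(a + x_j) - g a)` over the tail by
`B = ∑ ‖p_n‖ ε^n`. Cotype `q` converts this uniform bound on Rademacher sums into
`∑ ‖g(a + x_j) - g a‖^q ≤ (C B)^q` for every finite piece of the tail.
-/

open scoped ENNReal NNReal

noncomputable section

/-- Membership in `ℓ_q^u(E)`: the sequence is weakly `q`-summable and the weak `q`-norms of
its tails tend to `0`. -/
def MemLqU (𝕜 : Type*) [RCLike 𝕜] {E : Type*} [NormedAddCommGroup E]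
    [NormedSpace 𝕜 E] (q : ℝ) (x : ℕ → E) : Prop :=
  (∀ φ : E →L[𝕜] 𝕜, Summable fun j => ‖φ (x j)‖ ^ q) ∧
  ∀ ε : ℝ, 0 < ε → ∃ M : ℕ, ∀ m, M ≤ m → ∀ φ : E →L[𝕜] 𝕜, ‖φ‖ ≤ 1 →
    (∑' j : ℕ, ‖φ (x (j + m))‖ ^ q) ^ (1 / q) ≤ ε

open Finset

section

variable {𝕜 : Type*} [RCLike 𝕜]

def boolSign (𝕜 : Type*) [RCLike 𝕜] (b : Bool) : 𝕜 := if b then 1 else -1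

theorem norm_boolSign (b : Bool) : ‖boolSign 𝕜 b‖ = 1 := by
  cases b <;> simp [boolSign]

theorem boolSign_smul {F : Type*} [NormedAddCommGroup F] [NormedSpace 𝕜 F] (b : Bool) (z : F) :
    boolSign 𝕜 b • z = if b then z else -z := by
  cases b <;> simp [boolSign]

theorem sum_boolSign_mul_boolSign {ι : Type*} [Fintype ι] [DecidableEq ι] (i j : ι) :
    ∑ δ : ι → Bool, boolSign 𝕜 (δ i) * boolSign 𝕜 (δ j) =
      if i = j then (Fintype.card (ι → Bool) : 𝕜) else 0 := by
  split_ifs with hij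
  · subst hij
    simp [← sq, boolSign, apply_ite (· ^ 2), Finset.card_univ]
  · -- flipping the `i`-th sign changes the sign of every term
    refine Finset.sum_ninvolution (fun δ => Function.update δ i !(δ i)) (fun δ => ?_)
      (fun δ _ => ?_) (fun _ => mem_univ _) (fun δ => ?_)
    · rw [Function.update_self, Function.update_of_ne (Ne.symm hij)]
      cases δ i <;> cases δ j <;> simp [boolSign]
    · exact fun h => by simpa using congr_fun h i
    · ext l
      rcases eq_or_ne l i with rfl | hl <;> simp [Function.update_of_ne, *]

section Averaging

variable {E G : Type*} [NormedAddCommGroup E] [NormedSpace 𝕜 E]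
  [NormedAddCommGroup G] [NormedSpace 𝕜 G]

theorem sum_boolSign_smul_apply_sum_boolSign_smul {ι : Type*} [Fintype ι] [DecidableEq ι]
    (L : ι → E →ₗ[𝕜] G) (c : ι → 𝕜) (x : ι → E) :
    ∑ δ : ι → Bool, ∑ j, boolSign 𝕜 (δ j) • L j (∑ i, (boolSign 𝕜 (δ i) * c i) • x i) =
      (Fintype.card (ι → Bool) : 𝕜) • ∑ j, c j • L j (x j) := by
  simp only [map_sum, map_smul, smul_sum, smul_smul]
  rw [sum_comm]
  refine sum_congr rfl fun j _ => ?_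
  have hcoeff : ∀ i, ∑ δ : ι → Bool, boolSign 𝕜 (δ j) * (boolSign 𝕜 (δ i) * c i) =
      (∑ δ : ι → Bool, boolSign 𝕜 (δ i) * boolSign 𝕜 (δ j)) * c i := fun i => by
    rw [sum_mul]
    exact sum_congr rfl fun _ _ => by ring
  rw [sum_comm]
  simp only [← sum_smul, hcoeff, sum_boolSign_mul_boolSign, ite_mul, zero_mul, ite_smul,
    zero_smul, sum_ite_eq', mem_univ, if_true]

theorem norm_le_of_card_smul_eq_sum {α : Type*} [Fintype α] [Nonempty α] {y : G} {z : α → G}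
    {K : ℝ} (h : (Fintype.card α : 𝕜) • y = ∑ a, z a) (hz : ∀ a, ‖z a‖ ≤ K) : ‖y‖ ≤ K := by
  have hcard : (0 : ℝ) < Fintype.card α := by exact_mod_cast Fintype.card_pos
  refine le_of_mul_le_mul_left ?_ hcard
  calc (Fintype.card α : ℝ) * ‖y‖ = ‖∑ a, z a‖ := by rw [← h, norm_smul, RCLike.norm_natCast]
    _ ≤ ∑ a, ‖z a‖ := norm_sum_le _ _
    _ ≤ Fintype.card α * K := by simpa using sum_le_sum fun a (_ : a ∈ univ) => hz a

end Averaging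

namespace ContinuousMultilinearMap

variable {E F : Type*} [NormedAddCommGroup E] [NormedSpace 𝕜 E]
  [NormedAddCommGroup F] [NormedSpace 𝕜 F]

theorem apply_const_eq_curryLeft {n : ℕ}
    (A : ContinuousMultilinearMap 𝕜 (fun _ : Fin (n + 1) => E) F) (v : E) :
    A (fun _ => v) = A.curryLeft v (fun _ => v) := by
  rw [curryLeft_apply]
  exact congrArg A (Fin.cons_self_tail _).symm

theorem norm_sum_smul_apply_const_le {ι : Type*} [Fintype ι] {x : ι → E} {w : ℝ}
    (hw : ∀ d : ι → 𝕜, (∀ j, ‖d j‖ ≤ 1) → ‖∑ j, d j • x j‖ ≤ w) (n : ℕ)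
    (A : ContinuousMultilinearMap 𝕜 (fun _ : Fin (n + 1) => E) F) (c : ι → 𝕜)
    (hc : ∀ j, ‖c j‖ ≤ 1) :
    ‖∑ j, c j • A (fun _ => x j)‖ ≤ ‖A‖ * w ^ (n + 1) := by
  classical
  have hw0 : 0 ≤ w := (norm_nonneg _).trans (hw 0 fun _ => by simp)
  induction n generalizing c with
  | zero =>
    have hA : ∀ v, A (fun _ => v) = A.curryLeft v 0 := fun v => by
      rw [apply_const_eq_curryLeft]
      exact congrArg _ (Subsingleton.elim _ _)
    have hlin : ∑ j, c j • A (fun _ => x j) = A.curryLeft (∑ j, c j • x j) 0 := by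
      simp [hA]
    calc ‖∑ j, c j • A (fun _ => x j)‖ ≤ ‖A.curryLeft (∑ j, c j • x j)‖ := by
          simpa [hlin] using (A.curryLeft (∑ j, c j • x j)).le_opNorm 0
      _ ≤ ‖A‖ * ‖∑ j, c j • x j‖ := by
          rw [← curryLeft_norm]; exact A.curryLeft.le_opNorm _
      _ ≤ ‖A‖ * w ^ (0 + 1) := by
          simpa using mul_le_mul_of_nonneg_left (hw c hc) (norm_nonneg A)
  | succ m ih =>
    set T := A.curryLeft
    -- Averaging over sign vectors `δ` decouples the diagonal: `∑ j, c j • A (x j, …, x j)` is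
    -- the mean of `∑ j, δ j • T (v δ) (x j, …, x j)`, and `‖v δ‖ ≤ w`.
    set v : (ι → Bool) → E := fun δ => ∑ i, (boolSign 𝕜 (δ i) * c i) • x i
    have hv : ∀ δ, ‖v δ‖ ≤ w := fun δ => hw _ fun i => by
      rw [norm_mul, norm_boolSign, one_mul]; exact hc i
    let L : ι → E →ₗ[𝕜] F := fun j =>
      ((ContinuousMultilinearMap.apply 𝕜 _ F fun _ => x j).comp T : E →L[𝕜] F)
    have havg : (Fintype.card (ι → Bool) : 𝕜) • ∑ j, c j • A (fun _ => x j) =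
        ∑ δ, ∑ j, boolSign 𝕜 (δ j) • T (v δ) (fun _ => x j) := by
      simp only [apply_const_eq_curryLeft A]
      exact (sum_boolSign_smul_apply_sum_boolSign_smul L c x).symm
    refine norm_le_of_card_smul_eq_sum havg fun δ => ?_
    calc ‖∑ j, boolSign 𝕜 (δ j) • T (v δ) (fun _ => x j)‖
        ≤ ‖T (v δ)‖ * w ^ (m + 1) := ih _ _ fun j => (norm_boolSign _).le
      _ ≤ ‖A‖ * w * w ^ (m + 1) := by
          gcongr
          exact (T.le_opNorm _).trans (by rw [curryLeft_norm]; gcongr; exact hv δ)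
      _ = ‖A‖ * w ^ (m + 1 + 1) := by ring

end ContinuousMultilinearMap

section WeakSummability

variable {E : Type*} [NormedAddCommGroup E] [NormedSpace 𝕜 E]

theorem norm_sum_smul_comp_le_of_tsum_le {y : ℕ → E}
    (hy : ∀ φ : E →L[𝕜] 𝕜, Summable fun j => ‖φ (y j)‖) {ε : ℝ}
    (hε : ∀ φ : E →L[𝕜] 𝕜, ‖φ‖ ≤ 1 → ∑' j, ‖φ (y j)‖ ≤ ε)
    {ι : Type*} [Fintype ι] {e : ι → ℕ} (he : Function.Injective e) (d : ι → 𝕜)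
    (hd : ∀ i, ‖d i‖ ≤ 1) : ‖∑ i, d i • y (e i)‖ ≤ ε := by
  obtain ⟨φ, hφ, hφv⟩ := exists_dual_vector'' 𝕜 (∑ i, d i • y (e i))
  calc ‖∑ i, d i • y (e i)‖ = ‖φ (∑ i, d i • y (e i))‖ := by simp [hφv]
    _ ≤ ∑ i, ‖φ (y (e i))‖ := by
        simp only [map_sum, map_smul]
        refine (norm_sum_le _ _).trans (sum_le_sum fun i _ => ?_)
        rw [norm_smul]
        exact mul_le_of_le_one_left (norm_nonneg _) (hd i)
    _ = ∑' i, ‖φ (y (e i))‖ := (tsum_fintype _).symm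
    _ ≤ ∑' j, ‖φ (y j)‖ := tsum_comp_le_tsum_of_inj (hy φ) (fun _ => norm_nonneg _) he
    _ ≤ ε := hε φ hφ

theorem MemLqU.exists_norm_sum_smul_le {x : ℕ → E} (hx : MemLqU 𝕜 1 x) {ε : ℝ} (hε : 0 < ε) :
    ∃ M : ℕ, ∀ (k : ℕ) (d : Fin k → 𝕜), (∀ j, ‖d j‖ ≤ 1) →
      ‖∑ j, d j • x (j + M)‖ ≤ ε := by
  obtain ⟨M, hM⟩ := hx.2 ε hε
  refine ⟨M, fun k => norm_sum_smul_comp_le_of_tsum_le (y := fun j => x (j + M))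
    (fun φ => ?_) (fun φ hφ => ?_) Fin.val_injective⟩
  · simpa using (summable_nat_add_iff M).2 (hx.1 φ)
  · simpa using hM M le_rfl φ hφ

end WeakSummability

theorem HasCotypeWith.sum_rpow_norm_le {F : Type*} [NormedAddCommGroup F] {q C : ℝ}
    (hF : HasCotypeWith F q C) (hC : 0 ≤ C) (hq : 0 < q) {k : ℕ} (z : Fin k → F) {B : ℝ}
    (hB : ∀ ε : Fin k → Bool, ‖∑ j, (if ε j then z j else -z j)‖ ≤ B) :
    ∑ j, ‖z j‖ ^ q ≤ (C * B) ^ q := by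
  have hB0 : 0 ≤ B := (norm_nonneg _).trans (hB fun _ => true)
  have hmean : (2 : ℝ) ^ (-(k : ℝ)) *
      ∑ ε : Fin k → Bool, ‖∑ j, (if ε j then z j else -z j)‖ ^ (2 : ℝ) ≤ B ^ (2 : ℝ) := by
    have hsum := sum_le_card_nsmul univ _ _ fun ε (_ : ε ∈ univ) =>
      Real.rpow_le_rpow (norm_nonneg _) (hB ε) zero_le_two
    rw [card_univ, Fintype.card_fun, Fintype.card_bool, Fintype.card_fin, nsmul_eq_mul] at hsum
    rw [Real.rpow_neg zero_le_two, Real.rpow_natCast, inv_mul_le_iff₀ (by positivity)]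
    exact_mod_cast hsum
  have hroot : (∑ j, ‖z j‖ ^ q) ^ q⁻¹ ≤ C * B := by
    refine (one_div q ▸ hF k z).trans (mul_le_mul_of_nonneg_left ?_ hC)
    calc _ ≤ (B ^ (2 : ℝ)) ^ ((1 : ℝ) / 2) := by gcongr
      _ = B := by rw [← Real.rpow_mul hB0]; norm_num
  exact (Real.rpow_inv_le_iff_of_pos (sum_nonneg fun _ _ => by positivity)
    (mul_nonneg hC hB0) hq).1 hroot

theorem HasFPowerSeriesOnBall.norm_sum_smul_sub_le {E F : Type*} [NormedAddCommGroup E]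
    [NormedSpace 𝕜 E] [NormedAddCommGroup F] [NormedSpace 𝕜 F] {g : E → F}
    {p : FormalMultilinearSeries 𝕜 E F} {a : E} {r : ℝ≥0∞} (hp : HasFPowerSeriesOnBall g p a r)
    {ε : ℝ≥0} (hε : (ε : ℝ≥0∞) < r) {ι : Type*} [Fintype ι] {y : ι → E}
    (hy : ∀ d : ι → 𝕜, (∀ j, ‖d j‖ ≤ 1) → ‖∑ j, d j • y j‖ ≤ ε) (σ : ι → 𝕜)
    (hσ : ∀ i, ‖σ i‖ ≤ 1) :
    ‖∑ i, σ i • (g (a + y i) - g a)‖ ≤ ∑' n, ‖p (n + 1)‖ * (ε : ℝ) ^ (n + 1) := by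
  classical
  have hy_norm : ∀ i, ‖y i‖ ≤ ε := fun i => by
    simpa [Pi.single_apply] using hy (Pi.single i 1) fun j => by
      rcases eq_or_ne j i with rfl | h <;> simp [*]
  have hy_mem : ∀ i, y i ∈ Metric.eball (0 : E) r := fun i => by
    rw [Metric.mem_eball, edist_zero_right]
    exact lt_of_le_of_lt (by exact_mod_cast hy_norm i) hε
  have hsub : ∀ i, HasSum (fun n => p (n + 1) fun _ => y i) (g (a + y i) - g a) := fun i => by
    simpa [hp.coeff_zero] using (hasSum_nat_add_iff' 1).2 (hp.hasSum (hy_mem i))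
  have hmaj : HasSum (fun n => ‖p (n + 1)‖ * (ε : ℝ) ^ (n + 1)) _ :=
    ((summable_nat_add_iff 1).2 (p.summable_norm_mul_pow (hε.trans_le hp.r_le))).hasSum
  exact (hasSum_sum fun i _ => (hsub i).const_smul (σ i)).norm_le_of_bounded hmaj fun n =>
    (p (n + 1)).norm_sum_smul_apply_const_le hy n σ hσ

end

theorem analytic_summing_of_cotype_general
    {𝕜 : Type*} [RCLike 𝕜] {E F : Type*}
    [NormedAddCommGroup E] [NormedSpace 𝕜 E]
    [NormedAddCommGroup F] [NormedSpace 𝕜 F]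
    {q : ℝ} (hq : 2 ≤ q) (hF : HasCotype F q)
    {g : E → F} {a : E} (hg : AnalyticAt 𝕜 g a) :
    ∀ x : ℕ → E, MemLqU 𝕜 1 x →
      Summable fun j => ‖g (a + x j) - g a‖ ^ q := by
  intro x hx
  obtain ⟨C, hC, hcot⟩ := hF
  obtain ⟨p, r, hp⟩ := hg
  obtain ⟨ε, hε0, hεr⟩ := ENNReal.lt_iff_exists_nnreal_btwn.1 hp.r_pos
  obtain ⟨M, hM⟩ := hx.exists_norm_sum_smul_le (ε := ε) (by exact_mod_cast hε0)
  have hpartial : ∀ k, ∑ i ∈ range k, ‖g (a + x (i + M)) - g a‖ ^ q ≤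
      (C * ∑' n, ‖p (n + 1)‖ * (ε : ℝ) ^ (n + 1)) ^ q := fun k => by
    rw [← Fin.sum_univ_eq_sum_range (fun i => ‖g (a + x (i + M)) - g a‖ ^ q)]
    refine hcot.sum_rpow_norm_le hC (by linarith) _ fun δ => ?_
    simp only [← boolSign_smul (𝕜 := 𝕜)]
    exact hp.norm_sum_smul_sub_le hεr (hM k) _ fun i => (norm_boolSign _).le
  exact (summable_nat_add_iff M).1
    (summable_of_sum_range_le (fun _ => by positivity) hpartial)

/-- If `F` has cotype `q ∈ [2,∞)` and `g : E → F` is analytic at `a ∈ E`,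
then `g` is absolutely `(q;1)`-summing at `a`: `∑_j ‖g(a+x_j) − g(a)‖^q < ∞` for every
`(x_j) ∈ ℓ₁^u(E)`. -/
theorem analytic_summing_of_cotype
    {𝕜 : Type*} [RCLike 𝕜] {E F : Type*}
    [NormedAddCommGroup E] [NormedSpace 𝕜 E] [CompleteSpace E]
    [NormedAddCommGroup F] [NormedSpace 𝕜 F] [CompleteSpace F]
    {q : ℝ} (hq : 2 ≤ q) (hF : HasCotype F q)
    {g : E → F} {a : E} (hg : AnalyticAt 𝕜 g a) :
    ∀ x : ℕ → E, MemLqU 𝕜 1 x →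
      Summable fun j => ‖g (a + x j) - g a‖ ^ q :=
  analytic_summing_of_cotype_general hq hF hg
end
end
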